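/- arXiv:1003.3956 — 6 statements merged into one kernel-verified Lean document; each statement's English description precedes it below -/
import Mathlib

section
/- Let F = (f, g, h) be a GSWF on three alternatives with n voters satisfying the IIA condition. Then the probability of a non-transitive outcome satisfies P(F) = p₁p₂p₃ + (1−p₁)(1−p₂)(1−p₃) + ∑_{S ≠ ∅} (−1/3)^{|S|} f̂(S) ĝ(S) + ∑_{S ≠ ∅} (−1/3)^{|S|} ĝ(S) ĥ(S) + ∑_{S ≠ ∅} (−1/3)^{|S|} ĥ(S) f̂(S), where the sums range over nonempty S ⊆ {1,…,n}. -/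
open Finset

noncomputable section

/-- The discrete cube `{0,1}^n`. -/
abbrev Cube (n : ℕ) := Fin n → Bool

/-- Inner product of real-valued functions on the cube w.r.t. the uniform measure. -/
def cInner (n : ℕ) (f g : Cube n → ℝ) : ℝ :=
  (∑ x : Cube n, f x * g x) / 2 ^ n

/-- Expectation w.r.t. the uniform measure on the cube. -/
def cExp (n : ℕ) (f : Cube n → ℝ) : ℝ :=
  (∑ x : Cube n, f x) / 2 ^ n

/-- The Walsh character `r_S`. -/
def walsh (n : ℕ) (S : Finset (Fin n)) : Cube n → ℝ :=
  fun x => ∏ i ∈ S, (2 * (if x i then (1 : ℝ) else 0) - 1)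

/-- Fourier–Walsh coefficient of `f` at `S`. -/
def fcoef (n : ℕ) (f : Cube n → ℝ) (S : Finset (Fin n)) : ℝ :=
  cInner n f (walsh n S)

/-- Real-valued version of a Boolean function. -/
def BR (n : ℕ) (f : Cube n → Bool) : Cube n → ℝ :=
  fun x => if f x then 1 else 0

/-- A triple `(x,y,z)` of preference vectors comes from a profile of linear orders
on three alternatives iff no coordinate is cyclic, i.e. `¬(x k = y k = z k)` for all `k`. -/
def Profile3Ok (n : ℕ) (x y z : Cube n) : Prop :=
  ∀ k, ¬ (x k = y k ∧ y k = z k)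

/-- Probability of a non-transitive outcome for the IIA GSWF on three alternatives
given by pairwise choice functions `f, g, h`, for a uniformly random profile. -/
def PF3 (n : ℕ) (f g h : Cube n → Bool) : ℝ :=
  (Nat.card {p : Cube n × Cube n × Cube n //
      Profile3Ok n p.1 p.2.1 p.2.2 ∧ f p.1 = g p.2.1 ∧ g p.2.1 = h p.2.2} : ℝ) / 6 ^ n

/- ### auxiliary definitions -/

def eps (b : Bool) : ℝ := if b then 1 else -1

lemma walsh_eq (n : ℕ) (S : Finset (Fin n)) (x : Cube n) :
    walsh n S x = ∏ i ∈ S, eps (x i) := by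
  unfold walsh eps
  refine Finset.prod_congr rfl fun i _ => ?_
  cases x i <;> norm_num

def wfun (a b c : Bool) : ℝ := if a = b ∧ b = c then 0 else 1

def Wt (n : ℕ) (x y z : Cube n) : ℝ := ∏ k, wfun (x k) (y k) (z k)

/- factorization of sums over the cube -/
lemma pi_sum_prod {n : ℕ} {β : Type*} [Fintype β] (F : Fin n → β → ℝ) :
    ∑ x : Fin n → β, ∏ k, F k (x k) = ∏ k, ∑ b : β, F k b := by
  rw [Finset.prod_univ_sum]
  rw [Fintype.piFinset_univ]

lemma triple_cube_sum {n : ℕ} (G : Fin n → Bool → Bool → Bool → ℝ) :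
    ∑ x : Cube n, ∑ y : Cube n, ∑ z : Cube n, ∏ k, G k (x k) (y k) (z k)
      = ∏ k, ∑ a : Bool, ∑ b : Bool, ∑ c : Bool, G k a b c := by
  have h1 : ∀ x y : Cube n,
      ∑ z : Cube n, ∏ k, G k (x k) (y k) (z k)
        = ∏ k, ∑ c : Bool, G k (x k) (y k) c := fun x y =>
    pi_sum_prod (fun k c => G k (x k) (y k) c)
  simp_rw [h1]
  have h2 : ∀ x : Cube n,
      ∑ y : Cube n, ∏ k, ∑ c : Bool, G k (x k) (y k) c
        = ∏ k, ∑ b : Bool, ∑ c : Bool, G k (x k) b c := fun x =>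
    pi_sum_prod (fun k b => ∑ c : Bool, G k (x k) b c)
  simp_rw [h2]
  exact pi_sum_prod (fun k a => ∑ b : Bool, ∑ c : Bool, G k a b c)

/- orthogonality and inversion -/
lemma walsh_ortho {n : ℕ} (x y : Cube n) :
    ∑ S : Finset (Fin n), walsh n S y * walsh n S x
      = if y = x then (2:ℝ)^n else 0 := by
  have key : ∀ S : Finset (Fin n), walsh n S y * walsh n S x
      = ∏ i ∈ S, (eps (y i) * eps (x i)) := by
    intro S; rw [walsh_eq, walsh_eq, Finset.prod_mul_distrib]
  simp_rw [key]
  have hp : ∏ i : Fin n, (eps (y i) * eps (x i) + 1)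
      = ∑ S : Finset (Fin n), ∏ i ∈ S, (eps (y i) * eps (x i)) := by
    rw [Finset.prod_add]
    simp [Finset.powerset_univ]
  rw [← hp]
  by_cases hxy : y = x
  · subst hxy
    have : ∀ i : Fin n, eps (y i) * eps (y i) + 1 = 2 := by
      intro i; cases y i <;> simp [eps] <;> norm_num
    simp_rw [this]
    simp [Finset.prod_const]
  · rw [if_neg hxy]
    obtain ⟨i, hi⟩ : ∃ i, y i ≠ x i := by
      by_contra hc; push_neg at hc; exact hxy (funext hc)
    refine Finset.prod_eq_zero (Finset.mem_univ i) ?_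
    revert hi; cases y i <;> cases x i <;> simp [eps] <;> norm_num

lemma fourier_inversion {n : ℕ} (f : Cube n → ℝ) (x : Cube n) :
    ∑ S : Finset (Fin n), fcoef n f S * walsh n S x = f x := by
  unfold fcoef cInner
  have : ∀ S : Finset (Fin n),
      (∑ y : Cube n, f y * walsh n S y) / 2 ^ n * walsh n S x
        = (∑ y : Cube n, f y * (walsh n S y * walsh n S x)) / 2 ^ n := by
    intro S
    rw [div_mul_eq_mul_div, Finset.sum_mul]
    congr 1
    exact Finset.sum_congr rfl fun y _ => by ring
  simp_rw [this, ← Finset.sum_div, Finset.sum_comm (γ := Finset (Fin n)) (α := Cube n)]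
  simp_rw [← Finset.mul_sum, walsh_ortho]
  have h2 : (∑ y : Cube n, f y * if y = x then (2:ℝ)^n else 0) = f x * 2 ^ n := by
    simp [mul_ite, Finset.sum_ite_eq']
  rw [h2, mul_div_assoc, div_self (by positivity : ((2:ℝ)^n) ≠ 0), mul_one]

/- fcoef basics -/
lemma fcoef_empty {n : ℕ} (f : Cube n → ℝ) : fcoef n f ∅ = cExp n f := by
  unfold fcoef cInner cExp walsh
  simp

lemma fcoef_one_sub {n : ℕ} (f : Cube n → ℝ) (S : Finset (Fin n)) :
    fcoef n (fun x => 1 - f x) S = (if S = ∅ then 1 else 0) - fcoef n f S := by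
  unfold fcoef cInner
  have hw : ∑ x : Cube n, walsh n S x = if S = ∅ then (2:ℝ)^n else 0 := by
    have : ∀ x : Cube n, walsh n S x = ∏ k, (if k ∈ S then eps (x k) else 1) := by
      intro x
      rw [walsh_eq, Finset.prod_ite_mem Finset.univ S (fun k => eps (x k)), Finset.univ_inter]
    simp_rw [this]
    rw [pi_sum_prod (fun k b => if k ∈ S then eps b else 1)]
    by_cases hS : S = ∅
    · subst hS; simp
    · rw [if_neg hS]
      obtain ⟨i, hi⟩ := Finset.nonempty_iff_ne_empty.2 hS
      refine Finset.prod_eq_zero (Finset.mem_univ i) ?_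
      simp [hi, eps]
  have : ∑ x : Cube n, (1 - f x) * walsh n S x
      = (∑ x : Cube n, walsh n S x) - ∑ x : Cube n, f x * walsh n S x := by
    rw [← Finset.sum_sub_distrib]
    exact Finset.sum_congr rfl fun x _ => by ring
  rw [this, hw]
  by_cases hS : S = ∅
  · simp [hS, sub_div, div_self (by positivity : ((2:ℝ)^n) ≠ 0)]
  · simp [hS, sub_div, neg_div]

/- the per-coordinate sums -/
lemma Ek_eval {n : ℕ} (S T U : Finset (Fin n)) (k : Fin n) :
    (∑ a : Bool, ∑ b : Bool, ∑ c : Bool, wfun a b c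
        * (if k ∈ S then eps a else 1) * (if k ∈ T then eps b else 1)
        * (if k ∈ U then eps c else 1))
      = if ((k ∈ U) ↔ (k ∈ S ∧ k ∉ T) ∨ (k ∈ T ∧ k ∉ S)) then
          (if k ∈ S ∪ T then (-2:ℝ) else 6) else 0 := by
  by_cases hS : k ∈ S <;> by_cases hT : k ∈ T <;> by_cases hU : k ∈ U <;>
    simp [hS, hT, hU, wfun, eps, Fintype.sum_bool] <;> norm_num

/- main moment computation -/
lemma Msum_eval {n : ℕ} (S T U : Finset (Fin n)) :
    ∑ x : Cube n, ∑ y : Cube n, ∑ z : Cube n,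
        Wt n x y z * (walsh n S x * walsh n T y * walsh n U z)
      = if U = symmDiff S T then (6:ℝ)^n * (-(1/3))^(S ∪ T).card else 0 := by
  have hterm : ∀ x y z : Cube n,
      Wt n x y z * (walsh n S x * walsh n T y * walsh n U z)
        = ∏ k, (wfun (x k) (y k) (z k)
            * (if k ∈ S then eps (x k) else 1) * (if k ∈ T then eps (y k) else 1)
            * (if k ∈ U then eps (z k) else 1)) := by
    intro x y z
    have h1 : walsh n S x = ∏ k, (if k ∈ S then eps (x k) else 1) := by
      rw [walsh_eq, Finset.prod_ite_mem Finset.univ S (fun k => eps (x k)), Finset.univ_inter]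
    have h2 : walsh n T y = ∏ k, (if k ∈ T then eps (y k) else 1) := by
      rw [walsh_eq, Finset.prod_ite_mem Finset.univ T (fun k => eps (y k)), Finset.univ_inter]
    have h3 : walsh n U z = ∏ k, (if k ∈ U then eps (z k) else 1) := by
      rw [walsh_eq, Finset.prod_ite_mem Finset.univ U (fun k => eps (z k)), Finset.univ_inter]
    rw [h1, h2, h3]
    unfold Wt
    rw [← Finset.prod_mul_distrib, ← Finset.prod_mul_distrib, ← Finset.prod_mul_distrib]
    exact Finset.prod_congr rfl fun k _ => by ring
  simp_rw [hterm]
  rw [triple_cube_sum (fun k a b c => wfun a b c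
      * (if k ∈ S then eps a else 1) * (if k ∈ T then eps b else 1)
      * (if k ∈ U then eps c else 1))]
  simp_rw [Ek_eval S T U]
  by_cases hU : U = symmDiff S T
  · subst hU
    rw [if_pos rfl]
    have hgood : ∀ k : Fin n,
        (if ((k ∈ symmDiff S T) ↔ (k ∈ S ∧ k ∉ T) ∨ (k ∈ T ∧ k ∉ S)) then
          (if k ∈ S ∪ T then (-2:ℝ) else 6) else 0)
        = 6 * (if k ∈ S ∪ T then (-(1/3):ℝ) else 1) := by
      intro k
      rw [if_pos Finset.mem_symmDiff]
      by_cases hk : k ∈ S ∪ T <;> simp [hk] <;> norm_num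
    simp_rw [hgood]
    rw [Finset.prod_mul_distrib, Finset.prod_const,
      Finset.prod_ite_mem Finset.univ (S ∪ T) (fun _ => (-(1/3):ℝ)),
      Finset.univ_inter, Finset.prod_const]
    simp
  · rw [if_neg hU]
    obtain ⟨k, hk⟩ : ∃ k, ¬ ((k ∈ U) ↔ (k ∈ symmDiff S T)) := by
      by_contra hc; push_neg at hc
      exact hU (Finset.ext fun a => by
        have := hc a
        tauto)
    refine Finset.prod_eq_zero (Finset.mem_univ k) ?_
    rw [if_neg]
    intro hiff
    exact hk (hiff.trans Finset.mem_symmDiff.symm)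

instance Profile3Ok.dec (n : ℕ) (x y z : Cube n) : Decidable (Profile3Ok n x y z) :=
  inferInstanceAs (Decidable (∀ k, ¬ (x k = y k ∧ y k = z k)))

/- pointwise expansion of the indicator -/
lemma ind_expand {n : ℕ} (f g h : Cube n → Bool) (x y z : Cube n) :
    (if (Profile3Ok n x y z ∧ f x = g y ∧ g y = h z) then (1:ℝ) else 0)
      = Wt n x y z * (BR n f x * BR n g y * BR n h z
          + (1 - BR n f x) * (1 - BR n g y) * (1 - BR n h z)) := by
  have hA : (if Profile3Ok n x y z then (1:ℝ) else 0) = Wt n x y z := by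
    by_cases hp : Profile3Ok n x y z
    · rw [if_pos hp]
      symm
      exact Finset.prod_eq_one fun k _ => by unfold wfun; rw [if_neg (hp k)]
    · rw [if_neg hp]
      unfold Profile3Ok at hp
      push_neg at hp
      obtain ⟨k, hk⟩ := hp
      symm
      exact Finset.prod_eq_zero (Finset.mem_univ k) (by unfold wfun; rw [if_pos hk])
  have hB : (if (f x = g y ∧ g y = h z) then (1:ℝ) else 0)
      = BR n f x * BR n g y * BR n h z
          + (1 - BR n f x) * (1 - BR n g y) * (1 - BR n h z) := by
    cases hf : f x <;> cases hg : g y <;> cases hh : h z <;>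
      simp [BR, hf, hg, hh] <;> norm_num
  have hsplit : (if (Profile3Ok n x y z ∧ f x = g y ∧ g y = h z) then (1:ℝ) else 0)
      = (if Profile3Ok n x y z then (1:ℝ) else 0)
        * (if (f x = g y ∧ g y = h z) then (1:ℝ) else 0) := by
    by_cases h1 : Profile3Ok n x y z <;> by_cases h2 : (f x = g y ∧ g y = h z) <;>
      simp [h1, h2]
  rw [hsplit, hA, hB]

/- pointwise Fourier expansion of a triple product -/
lemma point_inv {n : ℕ} (F G H : Cube n → ℝ) (x y z : Cube n) :
    (∑ S : Finset (Fin n), ∑ T : Finset (Fin n), ∑ U : Finset (Fin n),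
      fcoef n F S * fcoef n G T * fcoef n H U
        * (Wt n x y z * (walsh n S x * walsh n T y * walsh n U z)))
      = Wt n x y z * (F x * G y * H z) := by
  have expand : ∀ (A B C : Finset (Fin n) → ℝ),
      (∑ S : Finset (Fin n), A S) * (∑ T : Finset (Fin n), B T)
          * (∑ U : Finset (Fin n), C U)
        = ∑ S : Finset (Fin n), ∑ T : Finset (Fin n), ∑ U : Finset (Fin n),
            A S * B T * C U := by
    intro A B C
    rw [Finset.sum_mul_sum, Finset.sum_mul]
    exact Finset.sum_congr rfl fun S _ => Finset.sum_mul_sum _ _ _ _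
  conv_rhs => rw [← fourier_inversion F x, ← fourier_inversion G y, ← fourier_inversion H z]
  rw [expand]
  rw [Finset.mul_sum]
  refine Finset.sum_congr rfl fun S _ => ?_
  rw [Finset.mul_sum]
  refine Finset.sum_congr rfl fun T _ => ?_
  rw [Finset.mul_sum]
  exact Finset.sum_congr rfl fun U _ => by ring

/- collecting the sum over profiles -/
lemma Asum {n : ℕ} (F G H : Cube n → ℝ) :
    (∑ p : Cube n × Cube n × Cube n, Wt n p.1 p.2.1 p.2.2 * (F p.1 * G p.2.1 * H p.2.2))
      = ∑ S : Finset (Fin n), ∑ T : Finset (Fin n),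
          fcoef n F S * fcoef n G T * fcoef n H (symmDiff S T)
            * ((6:ℝ)^n * (-(1/3))^((S ∪ T).card)) := by
  classical
  have step1 : ∀ p : Cube n × Cube n × Cube n,
      Wt n p.1 p.2.1 p.2.2 * (F p.1 * G p.2.1 * H p.2.2)
        = ∑ q : Finset (Fin n) × Finset (Fin n) × Finset (Fin n),
            fcoef n F q.1 * fcoef n G q.2.1 * fcoef n H q.2.2
              * (Wt n p.1 p.2.1 p.2.2
                * (walsh n q.1 p.1 * walsh n q.2.1 p.2.1 * walsh n q.2.2 p.2.2)) := by
    intro p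
    rw [Fintype.sum_prod_type]
    simp_rw [Fintype.sum_prod_type]
    exact (point_inv F G H p.1 p.2.1 p.2.2).symm
  simp_rw [step1]
  rw [Finset.sum_comm]
  have step2 : ∀ q : Finset (Fin n) × Finset (Fin n) × Finset (Fin n),
      (∑ p : Cube n × Cube n × Cube n,
          fcoef n F q.1 * fcoef n G q.2.1 * fcoef n H q.2.2
            * (Wt n p.1 p.2.1 p.2.2
              * (walsh n q.1 p.1 * walsh n q.2.1 p.2.1 * walsh n q.2.2 p.2.2)))
        = fcoef n F q.1 * fcoef n G q.2.1 * fcoef n H q.2.2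
            * (if q.2.2 = symmDiff q.1 q.2.1 then (6:ℝ)^n * (-(1/3))^((q.1 ∪ q.2.1).card) else 0) := by
    intro q
    rw [← Finset.mul_sum]
    congr 1
    rw [Fintype.sum_prod_type]
    simp_rw [Fintype.sum_prod_type]
    exact Msum_eval q.1 q.2.1 q.2.2
  simp_rw [step2]
  rw [Fintype.sum_prod_type]
  refine Finset.sum_congr rfl fun S _ => ?_
  rw [Fintype.sum_prod_type]
  refine Finset.sum_congr rfl fun T _ => ?_
  have : ∀ U : Finset (Fin n),
      fcoef n F S * fcoef n G T * fcoef n H U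
          * (if U = symmDiff S T then (6:ℝ)^n * (-(1/3))^((S ∪ T).card) else 0)
        = if U = symmDiff S T then
            fcoef n F S * fcoef n G T * fcoef n H U
              * ((6:ℝ)^n * (-(1/3))^((S ∪ T).card)) else 0 := by
    intro U
    by_cases hU : U = symmDiff S T <;> simp [hU]
  simp_rw [this]
  rw [Finset.sum_ite_eq' Finset.univ (symmDiff S T)
    (fun U => fcoef n F S * fcoef n G T * fcoef n H U * ((6:ℝ)^n * (-(1/3))^((S ∪ T).card)))]
  rw [if_pos (Finset.mem_univ _)]

/- final combinatorial identity for the pair sum -/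
lemma pair_sum {n : ℕ} (a b c : Finset (Fin n) → ℝ) :
    (∑ S : Finset (Fin n), ∑ T : Finset (Fin n),
      (a S * b T * c (symmDiff S T)
        + ((if S = ∅ then 1 else 0) - a S) * ((if T = ∅ then 1 else 0) - b T)
          * ((if symmDiff S T = ∅ then 1 else 0) - c (symmDiff S T)))
        * (-(1/3):ℝ)^((S ∪ T).card))
      = a ∅ * b ∅ * c ∅ + (1 - a ∅) * (1 - b ∅) * (1 - c ∅)
        + (∑ S ∈ Finset.univ.filter (fun S : Finset (Fin n) => S ≠ ∅),
            (-(1/3):ℝ)^S.card * a S * b S)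
        + (∑ S ∈ Finset.univ.filter (fun S : Finset (Fin n) => S ≠ ∅),
            (-(1/3):ℝ)^S.card * b S * c S)
        + (∑ S ∈ Finset.univ.filter (fun S : Finset (Fin n) => S ≠ ∅),
            (-(1/3):ℝ)^S.card * c S * a S) := by
  classical
  set v : Finset (Fin n) → Finset (Fin n) → ℝ := fun S T =>
    (a S * b T * c (symmDiff S T)
        + ((if S = ∅ then 1 else 0) - a S) * ((if T = ∅ then 1 else 0) - b T)
          * ((if symmDiff S T = ∅ then 1 else 0) - c (symmDiff S T)))
      * (-(1/3):ℝ)^((S ∪ T).card) with hv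
  have hSDs : ∀ S : Finset (Fin n), symmDiff S S = ∅ := fun S => by
    rw [symmDiff_self, Finset.bot_eq_empty]
  have hSDl : ∀ S : Finset (Fin n), symmDiff ∅ S = S := fun S => by
    rw [← Finset.bot_eq_empty, bot_symmDiff]
  have hSDr : ∀ S : Finset (Fin n), symmDiff S ∅ = S := fun S => by
    rw [← Finset.bot_eq_empty, symmDiff_bot]
  have h00 : v ∅ ∅ = a ∅ * b ∅ * c ∅ + (1 - a ∅) * (1 - b ∅) * (1 - c ∅) := by
    simp [hv, hSDl]
  have h0T : ∀ T ∈ Finset.univ.erase (∅ : Finset (Fin n)),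
      v ∅ T = (-(1/3):ℝ)^T.card * b T * c T := by
    intro T hT
    have hT' : T ≠ ∅ := (Finset.mem_erase.1 hT).1
    simp only [hv, hSDl, Finset.empty_union, if_pos rfl, if_neg hT', eq_self_iff_true, if_true]
    ring
  have hS0 : ∀ S : Finset (Fin n), S ≠ ∅ → v S ∅ = (-(1/3):ℝ)^S.card * c S * a S := by
    intro S hS
    simp only [hv, hSDr, Finset.union_empty, if_pos rfl, if_neg hS, eq_self_iff_true, if_true]
    ring
  have hSS : ∀ S : Finset (Fin n), S ≠ ∅ → v S S = (-(1/3):ℝ)^S.card * a S * b S := by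
    intro S hS
    simp only [hv, hSDs, Finset.union_self, if_pos rfl, if_neg hS, eq_self_iff_true, if_true]
    ring
  have hzero : ∀ S T : Finset (Fin n), S ≠ ∅ → T ≠ ∅ → T ≠ S → v S T = 0 := by
    intro S T hS hT hTS
    have hd : symmDiff S T ≠ ∅ := by
      rw [← Finset.bot_eq_empty, Ne, symmDiff_eq_bot]
      exact fun hh => hTS hh.symm
    simp only [hv, if_neg hS, if_neg hT, if_neg hd]
    ring
  have split1 : (∑ S : Finset (Fin n), ∑ T : Finset (Fin n), v S T)
      = (∑ T : Finset (Fin n), v ∅ T)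
        + ∑ S ∈ Finset.univ.erase (∅ : Finset (Fin n)), ∑ T : Finset (Fin n), v S T :=
    (Finset.add_sum_erase _ _ (Finset.mem_univ _)).symm
  have split2 : (∑ T : Finset (Fin n), v ∅ T)
      = v ∅ ∅ + ∑ T ∈ Finset.univ.erase (∅ : Finset (Fin n)), v ∅ T :=
    (Finset.add_sum_erase _ _ (Finset.mem_univ _)).symm
  have hinner : ∀ S ∈ Finset.univ.erase (∅ : Finset (Fin n)),
      (∑ T : Finset (Fin n), v S T)
        = (-(1/3):ℝ)^S.card * c S * a S + (-(1/3):ℝ)^S.card * a S * b S := by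
    intro S hSmem
    have hS : S ≠ ∅ := (Finset.mem_erase.1 hSmem).1
    have e1 : (∑ T : Finset (Fin n), v S T)
        = v S ∅ + ∑ T ∈ Finset.univ.erase (∅ : Finset (Fin n)), v S T :=
      (Finset.add_sum_erase _ _ (Finset.mem_univ _)).symm
    have e2 : (∑ T ∈ Finset.univ.erase (∅ : Finset (Fin n)), v S T) = v S S := by
      refine Finset.sum_eq_single_of_mem S (Finset.mem_erase.2 ⟨hS, Finset.mem_univ _⟩) ?_
      intro T hT hTS
      exact hzero S T hS (Finset.mem_erase.1 hT).1 hTS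
    rw [e1, e2, hS0 S hS, hSS S hS]
  have hfilter : (Finset.univ.filter (fun S : Finset (Fin n) => S ≠ ∅))
      = Finset.univ.erase ∅ := Finset.filter_ne' _ _
  rw [show (∑ S : Finset (Fin n), ∑ T : Finset (Fin n),
      (a S * b T * c (symmDiff S T)
        + ((if S = ∅ then 1 else 0) - a S) * ((if T = ∅ then 1 else 0) - b T)
          * ((if symmDiff S T = ∅ then 1 else 0) - c (symmDiff S T)))
        * (-(1/3):ℝ)^((S ∪ T).card))
      = ∑ S : Finset (Fin n), ∑ T : Finset (Fin n), v S T from rfl]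
  rw [split1, split2, h00, Finset.sum_congr rfl h0T, Finset.sum_congr rfl hinner,
    Finset.sum_add_distrib, hfilter]
  ring



/-- **Kalai's formula** for the probability of a non-transitive outcome of an IIA GSWF
on three alternatives. -/
theorem kalai_formula (n : ℕ) (f g h : Cube n → Bool) :
    PF3 n f g h =
      cExp n (BR n f) * cExp n (BR n g) * cExp n (BR n h)
      + (1 - cExp n (BR n f)) * (1 - cExp n (BR n g)) * (1 - cExp n (BR n h))
      + (∑ S ∈ Finset.univ.filter (fun S : Finset (Fin n) => S ≠ ∅),
          (-(1 / 3) : ℝ) ^ S.card * fcoef n (BR n f) S * fcoef n (BR n g) S)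
      + (∑ S ∈ Finset.univ.filter (fun S : Finset (Fin n) => S ≠ ∅),
          (-(1 / 3) : ℝ) ^ S.card * fcoef n (BR n g) S * fcoef n (BR n h) S)
      + (∑ S ∈ Finset.univ.filter (fun S : Finset (Fin n) => S ≠ ∅),
          (-(1 / 3) : ℝ) ^ S.card * fcoef n (BR n h) S * fcoef n (BR n f) S) := by
  have hcard : PF3 n f g h
      = (∑ p : Cube n × Cube n × Cube n,
          if (Profile3Ok n p.1 p.2.1 p.2.2 ∧ f p.1 = g p.2.1 ∧ g p.2.1 = h p.2.2)
            then (1:ℝ) else 0) / 6 ^ n := by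
    unfold PF3
    congr 1
    rw [Nat.card_eq_fintype_card, Fintype.card_subtype, ← Finset.sum_boole]
  rw [hcard]
  have hsum : (∑ p : Cube n × Cube n × Cube n,
        if (Profile3Ok n p.1 p.2.1 p.2.2 ∧ f p.1 = g p.2.1 ∧ g p.2.1 = h p.2.2)
          then (1:ℝ) else 0)
      = (∑ p : Cube n × Cube n × Cube n,
          Wt n p.1 p.2.1 p.2.2 * (BR n f p.1 * BR n g p.2.1 * BR n h p.2.2))
        + (∑ p : Cube n × Cube n × Cube n,
          Wt n p.1 p.2.1 p.2.2
            * ((1 - BR n f p.1) * (1 - BR n g p.2.1) * (1 - BR n h p.2.2))) := by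
    rw [← Finset.sum_add_distrib]
    refine Finset.sum_congr rfl fun p _ => ?_
    rw [ind_expand f g h p.1 p.2.1 p.2.2]
    ring
  rw [hsum]
  have hA1 := Asum (n := n) (BR n f) (BR n g) (BR n h)
  have hA2 := Asum (n := n) (fun x => 1 - BR n f x) (fun x => 1 - BR n g x)
    (fun x => 1 - BR n h x)
  rw [hA1, hA2]
  have hmerge : (∑ S : Finset (Fin n), ∑ T : Finset (Fin n),
        fcoef n (BR n f) S * fcoef n (BR n g) T * fcoef n (BR n h) (symmDiff S T)
          * ((6:ℝ)^n * (-(1/3))^((S ∪ T).card)))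
      + (∑ S : Finset (Fin n), ∑ T : Finset (Fin n),
        fcoef n (fun x => 1 - BR n f x) S * fcoef n (fun x => 1 - BR n g x) T
            * fcoef n (fun x => 1 - BR n h x) (symmDiff S T)
          * ((6:ℝ)^n * (-(1/3))^((S ∪ T).card)))
      = (6:ℝ)^n * ∑ S : Finset (Fin n), ∑ T : Finset (Fin n),
          (fcoef n (BR n f) S * fcoef n (BR n g) T * fcoef n (BR n h) (symmDiff S T)
            + ((if S = ∅ then 1 else 0) - fcoef n (BR n f) S)
              * ((if T = ∅ then 1 else 0) - fcoef n (BR n g) T)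
              * ((if symmDiff S T = ∅ then 1 else 0) - fcoef n (BR n h) (symmDiff S T)))
            * (-(1/3):ℝ)^((S ∪ T).card) := by
    rw [Finset.mul_sum, ← Finset.sum_add_distrib]
    refine Finset.sum_congr rfl fun S _ => ?_
    rw [Finset.mul_sum, ← Finset.sum_add_distrib]
    refine Finset.sum_congr rfl fun T _ => ?_
    rw [fcoef_one_sub (BR n f) S, fcoef_one_sub (BR n g) T,
      fcoef_one_sub (BR n h) (symmDiff S T)]
    ring
  rw [hmerge, mul_div_cancel_left₀ _ (by positivity : ((6:ℝ)^n) ≠ 0)]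
  rw [pair_sum (fcoef n (BR n f)) (fcoef n (BR n g)) (fcoef n (BR n h))]
  rw [fcoef_empty, fcoef_empty, fcoef_empty]

end
end

section
/- Let F = (f, g, h) be a GSWF on three alternatives with n voters satisfying the IIA condition. Then the probability of a non-transitive outcome satisfies P(F) = ⟨T_{1/3} f′, g⟩ + ⟨T_{1/3} ḡ, 1−h⟩ − ⟨T_{1/3} f′, 1−h⟩. -/
open Finset

noncomputable section

/-- The noise operator `T_ρ`. -/
def noiseOp (n : ℕ) (ρ : ℝ) (f : Cube n → ℝ) : Cube n → ℝ :=
  fun x => ∑ S : Finset (Fin n), ρ ^ S.card * fcoef n f S * walsh n S x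

/-- `f′(x) = f(1-x₁,…,1-xₙ)`. -/
def flipB (n : ℕ) (f : Cube n → Bool) : Cube n → Bool :=
  fun x => f (fun i => !(x i))

/-- The dual function `f̄(x) = 1 - f(1-x₁,…,1-xₙ)`. -/
def dualB (n : ℕ) (f : Cube n → Bool) : Cube n → Bool :=
  fun x => !(f (fun i => !(x i)))

/-- `1 - f`. -/
def notB (n : ℕ) (f : Cube n → Bool) : Cube n → Bool :=
  fun x => !(f x)

/-!
A triple `(x, y, z)` of cube points comes from a profile iff no coordinate has
`x k = y k = z k`, so for any two of the three points the number of admissible third points is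
`∏ i, (if the two agree at i then 1 else 2)`, whichever two positions they occupy. For bits,
`[a = b = c] = a b + (1 - b)(1 - c) - a (1 - c)`, so `6 ^ n • P(F)` splits into three double
sums `∑ u v, F u G v · #completions(u, v)`. On the Fourier side `T_ρ` has kernel
`∏ i, (1 ± ρ)` (sign `+` where the points agree), and for `ρ = 1/3` the kernel at `(¬x, y)` is
`(2/3) ^ n` times the completion count of `(x, y)`: each double sum is some `⟨T_{1/3} F′, G⟩`.
-/

namespace KalaiFormula

instance (n : ℕ) (x y z : Cube n) : Decidable (Profile3Ok n x y z) :=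
  inferInstanceAs (Decidable (∀ _, _))

def profileInd (n : ℕ) (x y z : Cube n) : ℝ :=
  if Profile3Ok n x y z then 1 else 0

def profileCompletions (n : ℕ) (x y : Cube n) : ℝ :=
  ∏ i, if x i = y i then 1 else 2

lemma profileCompletions_comm (n : ℕ) (x y : Cube n) :
    profileCompletions n x y = profileCompletions n y x := by
  simp only [profileCompletions, eq_comm]

lemma profileInd_eq_prod (n : ℕ) (x y z : Cube n) :
    profileInd n x y z = ∏ k, if x k = y k ∧ y k = z k then (0 : ℝ) else 1 := by
  by_cases hxyz : Profile3Ok n x y z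
  · rw [profileInd, if_pos hxyz, Finset.prod_eq_one fun k _ => if_neg (hxyz k)]
  · obtain ⟨k, hk⟩ := not_forall_not.mp hxyz
    rw [profileInd, if_neg hxyz, eq_comm]
    exact Finset.prod_eq_zero (Finset.mem_univ k) (if_pos hk)

lemma profileInd_rotate (n : ℕ) (x y z : Cube n) :
    profileInd n x y z = profileInd n y z x := by
  simp only [profileInd, Profile3Ok]
  congr 1
  exact propext <| forall_congr' fun k => by grind

lemma sum_z_profileInd (n : ℕ) (x y : Cube n) :
    ∑ z, profileInd n x y z = profileCompletions n x y := by
  simp_rw [profileInd_eq_prod, profileCompletions]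
  rw [← Fintype.prod_sum fun k b => if x k = y k ∧ y k = b then (0 : ℝ) else 1]
  refine Finset.prod_congr rfl fun k _ => ?_
  cases x k <;> cases y k <;> norm_num

lemma sum_x_profileInd (n : ℕ) (y z : Cube n) :
    ∑ x, profileInd n x y z = profileCompletions n y z := by
  rw [Finset.sum_congr rfl fun x _ => profileInd_rotate n x y z, sum_z_profileInd]

lemma sum_y_profileInd (n : ℕ) (x z : Cube n) :
    ∑ y, profileInd n x y z = profileCompletions n x z := by
  rw [Finset.sum_congr rfl fun y _ => (profileInd_rotate n z x y).symm, sum_z_profileInd,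
    profileCompletions_comm]

lemma sum_profileInd_mul_xy (n : ℕ) (Φ : Cube n → Cube n → ℝ) :
    ∑ x, ∑ y, ∑ z, profileInd n x y z * Φ x y
      = ∑ x, ∑ y, Φ x y * profileCompletions n x y := by
  simp_rw [← Finset.sum_mul, sum_z_profileInd, mul_comm]

lemma sum_profileInd_mul_yz (n : ℕ) (Φ : Cube n → Cube n → ℝ) :
    ∑ x, ∑ y, ∑ z, profileInd n x y z * Φ y z
      = ∑ y, ∑ z, Φ y z * profileCompletions n y z := by
  rw [Finset.sum_comm]
  refine Finset.sum_congr rfl fun y _ => ?_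
  rw [Finset.sum_comm]
  simp_rw [← Finset.sum_mul, sum_x_profileInd, mul_comm]

lemma sum_profileInd_mul_xz (n : ℕ) (Φ : Cube n → Cube n → ℝ) :
    ∑ x, ∑ y, ∑ z, profileInd n x y z * Φ x z
      = ∑ x, ∑ z, Φ x z * profileCompletions n x z := by
  refine Finset.sum_congr rfl fun x _ => ?_
  rw [Finset.sum_comm]
  simp_rw [← Finset.sum_mul, sum_y_profileInd, mul_comm]

lemma card_profiles_eq_sum (n : ℕ) (f g h : Cube n → Bool) :
    (Nat.card {p : Cube n × Cube n × Cube n //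
        Profile3Ok n p.1 p.2.1 p.2.2 ∧ f p.1 = g p.2.1 ∧ g p.2.1 = h p.2.2} : ℝ)
      = ∑ x, ∑ y, ∑ z, profileInd n x y z * if f x = g y ∧ g y = h z then 1 else 0 := by
  rw [Nat.card_eq_fintype_card, Fintype.card_subtype, Finset.card_filter]
  push_cast
  simp only [Fintype.sum_prod_type, profileInd, ite_zero_mul_ite_zero, mul_one]

lemma sum_pow_card_mul_walsh_mul_walsh (n : ℕ) (ρ : ℝ) (x y : Cube n) :
    ∑ S : Finset (Fin n), ρ ^ S.card * walsh n S x * walsh n S y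
      = ∏ i, if x i = y i then 1 + ρ else 1 - ρ := by
  have hcoord : ∀ i, (if x i = y i then 1 + ρ else 1 - ρ)
      = 1 + ρ * (2 * (if x i then (1 : ℝ) else 0) - 1)
          * (2 * (if y i then (1 : ℝ) else 0) - 1) := by
    intro i
    cases x i <;> cases y i <;> norm_num <;> ring
  simp_rw [hcoord, Finset.prod_one_add, Finset.powerset_univ, walsh, Finset.prod_mul_distrib,
    Finset.prod_const]

lemma cInner_noiseOp (n : ℕ) (ρ : ℝ) (F G : Cube n → ℝ) :
    cInner n (noiseOp n ρ F) G
      = (∑ x, ∑ y, F x * G y * ∏ i, if x i = y i then 1 + ρ else 1 - ρ) / 4 ^ n := by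
  simp_rw [← sum_pow_card_mul_walsh_mul_walsh, cInner, noiseOp, fcoef, cInner]
  simp only [Finset.sum_div, Finset.mul_sum, Finset.sum_mul]
  conv_lhs => enter [2, y]; rw [Finset.sum_comm]
  rw [Finset.sum_comm]
  refine Finset.sum_congr rfl fun x _ => Finset.sum_congr rfl fun y _ =>
    Finset.sum_congr rfl fun S _ => ?_
  rw [show (4 : ℝ) ^ n = 2 ^ n * 2 ^ n by rw [← mul_pow]; norm_num]
  field_simp

lemma cube_not_involutive (n : ℕ) : Function.Involutive fun (x : Cube n) i => !(x i) :=
  fun x => funext fun i => Bool.not_not (x i)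

lemma prod_ite_not_eq_one_third (n : ℕ) (x y : Cube n) :
    (∏ i, if (!(x i)) = y i then 1 + 1 / 3 else 1 - 1 / 3 : ℝ)
      = (2 / 3) ^ n * profileCompletions n x y := by
  rw [profileCompletions, ← Fin.prod_const, ← Finset.prod_mul_distrib]
  refine Finset.prod_congr rfl fun i _ => ?_
  cases x i <;> cases y i <;> norm_num

lemma cInner_noiseOp_one_third_comp_not (n : ℕ) (F G : Cube n → ℝ) :
    cInner n (noiseOp n (1 / 3) fun x => F fun i => !(x i)) G
      = (∑ x, ∑ y, F x * G y * profileCompletions n x y) / 6 ^ n := by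
  rw [cInner_noiseOp, ← (cube_not_involutive n).bijective.sum_comp]
  simp only [Bool.not_not, prod_ite_not_eq_one_third, mul_left_comm _ ((2 / 3 : ℝ) ^ n),
    ← Finset.mul_sum]
  rw [show (6 : ℝ) ^ n = 4 ^ n * (3 / 2) ^ n by rw [← mul_pow]; norm_num]
  field_simp
  rw [mul_right_comm, ← mul_pow]
  norm_num

lemma BR_flipB (n : ℕ) (f : Cube n → Bool) :
    BR n (flipB n f) = fun x => BR n f fun i => !(x i) :=
  rfl

lemma BR_dualB (n : ℕ) (g : Cube n → Bool) :
    BR n (dualB n g) = fun y => 1 - BR n g fun i => !(y i) := by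
  funext y
  unfold BR dualB
  cases g fun i => !(y i) <;> norm_num

lemma BR_notB (n : ℕ) (h : Cube n → Bool) : BR n (notB n h) = fun z => 1 - BR n h z := by
  funext z
  unfold BR notB
  cases h z <;> norm_num

lemma ite_eq_and_eq_bool (a b c : Bool) :
    (if a = b ∧ b = c then (1 : ℝ) else 0)
      = (if a then 1 else 0) * (if b then 1 else 0)
        + (1 - if b then 1 else 0) * (1 - if c then 1 else 0)
        - (if a then 1 else 0) * (1 - if c then 1 else 0) := by
  cases a <;> cases b <;> cases c <;> norm_num

end KalaiFormula

open KalaiFormula in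
/-- `P(F) = ⟨T_{1/3} f′, g⟩ + ⟨T_{1/3} ḡ, 1−h⟩ − ⟨T_{1/3} f′, 1−h⟩`. -/
theorem kalai_formula_modification1 (n : ℕ) (f g h : Cube n → Bool) :
    PF3 n f g h =
      cInner n (noiseOp n (1 / 3) (BR n (flipB n f))) (BR n g)
      + cInner n (noiseOp n (1 / 3) (BR n (dualB n g))) (BR n (notB n h))
      - cInner n (noiseOp n (1 / 3) (BR n (flipB n f))) (BR n (notB n h)) := by
  rw [BR_flipB, BR_dualB, BR_notB, cInner_noiseOp_one_third_comp_not,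
    cInner_noiseOp_one_third_comp_not n (fun y => 1 - BR n g y),
    cInner_noiseOp_one_third_comp_not, ← sum_profileInd_mul_xy, ← sum_profileInd_mul_yz,
    ← sum_profileInd_mul_xz, ← add_div, ← sub_div, PF3, card_profiles_eq_sum]
  congr 1
  simp only [← Finset.sum_add_distrib, ← Finset.sum_sub_distrib]
  refine Finset.sum_congr rfl fun x _ => Finset.sum_congr rfl fun y _ =>
    Finset.sum_congr rfl fun z _ => ?_
  rw [ite_eq_and_eq_bool]
  unfold BR
  ring
end
end

section
/- Let F = (f, g, h) be a GSWF on three alternatives with n voters satisfying the IIA condition. Then the probability of a non-transitive outcome satisfies P(F) = ⟨T_{1/3} f′, h⟩ + ⟨T_{1/3}(1−g), h̄⟩ − ⟨T_{1/3} f′, 1−g⟩. -/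
open Finset

noncomputable section

namespace Kalai
variable {n : ℕ}

def Xr (b : Bool) : ℝ := 2 * (if b then (1 : ℝ) else 0) - 1
def eqw (b c : Bool) : ℝ := if b = c then 1 else 2
def w2 (b c : Bool) : ℝ := if b = c then 2 else 1
def wInd (n : ℕ) (x y z : Cube n) : ℝ := ∏ i, if x i = y i ∧ y i = z i then (0:ℝ) else 1
def cubeNeg (n : ℕ) : Cube n → Cube n := fun x i => !(x i)

lemma walsh_eq (S : Finset (Fin n)) (x : Cube n) : walsh n S x = ∏ i ∈ S, Xr (x i) := rfl

lemma fcoef_eq (a : Cube n → ℝ) (S : Finset (Fin n)) :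
    fcoef n a S = (∑ x : Cube n, a x * walsh n S x) / 2 ^ n := rfl

lemma inner_noise (ρ : ℝ) (a b : Cube n → ℝ) :
    cInner n (noiseOp n ρ a) b
      = ∑ S : Finset (Fin n), ρ ^ S.card * fcoef n a S * fcoef n b S := by
  calc cInner n (noiseOp n ρ a) b
      = (∑ x : Cube n, ∑ S : Finset (Fin n),
          ρ ^ S.card * fcoef n a S * (walsh n S x * b x)) / 2 ^ n := by
        unfold cInner noiseOp
        congr 1
        refine Finset.sum_congr rfl fun x _ => ?_
        rw [Finset.sum_mul]
        exact Finset.sum_congr rfl fun S _ => by ring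
    _ = (∑ S : Finset (Fin n), ρ ^ S.card * fcoef n a S * ∑ x : Cube n, walsh n S x * b x) / 2 ^ n := by
        congr 1
        refine (Finset.sum_comm).trans ?_
        exact Finset.sum_congr rfl fun S _ => (Finset.mul_sum _ _ _).symm
    _ = ∑ S : Finset (Fin n), ρ ^ S.card * fcoef n a S * fcoef n b S := by
        rw [Finset.sum_div]
        refine Finset.sum_congr rfl fun S _ => ?_
        rw [fcoef_eq b S, mul_div_assoc]
        congr 2
        exact Finset.sum_congr rfl fun x _ => mul_comm _ _

lemma one_add_third (b c : Bool) :
    (1/3:ℝ) * (Xr b * Xr c) + 1 = w2 b c * (2/3) := by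
  cases b <;> cases c <;> simp [Xr, w2] <;> norm_num

lemma sumS (u v : Cube n) :
    ∑ S : Finset (Fin n), (1/3:ℝ)^S.card * walsh n S u * walsh n S v
      = (∏ i, w2 (u i) (v i)) * (2/3)^n := by
  have h1 : ∀ S : Finset (Fin n), (1/3:ℝ)^S.card * walsh n S u * walsh n S v
      = ∏ i ∈ S, ((1/3:ℝ) * (Xr (u i) * Xr (v i))) := by
    intro S
    rw [walsh_eq, walsh_eq, Finset.prod_mul_distrib, Finset.prod_mul_distrib,
      Finset.prod_const]
    ring
  simp only [h1]
  have h2 := Finset.prod_add (fun i : Fin n => (1/3:ℝ) * (Xr (u i) * Xr (v i)))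
      (fun _ => (1:ℝ)) Finset.univ
  simp only [Finset.prod_const_one, mul_one] at h2
  rw [← Finset.powerset_univ, ← h2]
  have h3 : ∀ i : Fin n, (1/3:ℝ) * (Xr (u i) * Xr (v i)) + 1 = w2 (u i) (v i) * (2/3) :=
    fun i => one_add_third _ _
  simp only [h3]
  rw [Finset.prod_mul_distrib, Finset.prod_const]
  congr 1
  simp [Finset.card_univ]

lemma pow23 (n : ℕ) : ((2:ℝ)/3)^n * 6^n = 4^n := by
  rw [← mul_pow]; norm_num

lemma cInner_noise_third (a b : Cube n → ℝ) :
    cInner n (noiseOp n (1/3) a) b * 6 ^ n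
      = ∑ u : Cube n, ∑ v : Cube n, a u * b v * ∏ i, w2 (u i) (v i) := by
  rw [inner_noise]
  have key : (∑ S : Finset (Fin n), (1/3:ℝ)^S.card * fcoef n a S * fcoef n b S)
      = (∑ u : Cube n, ∑ v : Cube n, a u * b v * ∏ i, w2 (u i) (v i)) * (2/3)^n / 4^n := by
    calc (∑ S : Finset (Fin n), (1/3:ℝ)^S.card * fcoef n a S * fcoef n b S)
        = (∑ S : Finset (Fin n), ∑ u : Cube n, ∑ v : Cube n,
            a u * b v * ((1/3:ℝ)^S.card * walsh n S u * walsh n S v)) / 4^n := by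
          rw [Finset.sum_div]
          refine Finset.sum_congr rfl fun S _ => ?_
          rw [fcoef_eq a S, fcoef_eq b S, mul_assoc, div_mul_div_comm,
            Finset.sum_mul_sum]
          have h4 : (2:ℝ)^n * 2^n = 4^n := by rw [← mul_pow]; norm_num
          rw [h4, ← mul_div_assoc]
          congr 1
          simp only [Finset.mul_sum]
          exact Finset.sum_congr rfl fun x _ => Finset.sum_congr rfl fun y _ => by ring
      _ = (∑ u : Cube n, ∑ v : Cube n, a u * b v *
            ∑ S : Finset (Fin n), (1/3:ℝ)^S.card * walsh n S u * walsh n S v) / 4^n := by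
          congr 1
          refine (Finset.sum_comm).trans ?_
          refine Finset.sum_congr rfl fun u _ => ?_
          refine (Finset.sum_comm).trans ?_
          refine Finset.sum_congr rfl fun v _ => ?_
          exact (Finset.mul_sum _ _ _).symm
      _ = (∑ u : Cube n, ∑ v : Cube n,
            (a u * b v * ∏ i, w2 (u i) (v i)) * (2/3)^n) / 4^n := by
          congr 1
          refine Finset.sum_congr rfl fun u _ => Finset.sum_congr rfl fun v _ => ?_
          rw [sumS]; ring
      _ = (∑ u : Cube n, ∑ v : Cube n, a u * b v * ∏ i, w2 (u i) (v i)) * (2/3)^n / 4^n := by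
          congr 1
          rw [Finset.sum_mul]
          exact Finset.sum_congr rfl fun u _ => (Finset.sum_mul _ _ _).symm
  rw [key]
  rw [div_mul_eq_mul_div, mul_assoc, pow23]
  field_simp

lemma cubeNeg_invol (n : ℕ) : Function.Involutive (cubeNeg n) := by
  intro x; funext i; simp [cubeNeg]

lemma sum_cubeNeg (φ : Cube n → ℝ) :
    ∑ u : Cube n, φ u = ∑ x : Cube n, φ (cubeNeg n x) :=
  (Equiv.sum_comp ((cubeNeg_invol n).toPerm _) φ).symm

lemma w2_not_left (b c : Bool) : w2 (!b) c = eqw b c := by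
  cases b <;> cases c <;> simp [w2, eqw]

lemma w2_not_right (b c : Bool) : w2 b (!c) = eqw b c := by
  cases b <;> cases c <;> simp [w2, eqw]

lemma sum_bool_mid (p r : Bool) :
    ∑ b : Bool, (if p = b ∧ b = r then (0:ℝ) else 1) = eqw p r := by
  cases p <;> cases r <;> simp [eqw]

lemma sum_bool_left (q r : Bool) :
    ∑ b : Bool, (if b = q ∧ q = r then (0:ℝ) else 1) = eqw q r := by
  cases q <;> cases r <;> simp [eqw]

lemma sum_bool_right (p q : Bool) :
    ∑ b : Bool, (if p = q ∧ q = b then (0:ℝ) else 1) = eqw p q := by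
  cases p <;> cases q <;> simp [eqw]

lemma sum_mid (x z : Cube n) :
    ∑ y : Cube n, wInd n x y z = ∏ i, eqw (x i) (z i) := by
  unfold wInd
  have h := Finset.prod_univ_sum (fun _ : Fin n => (univ : Finset Bool))
      (fun i b => if x i = b ∧ b = z i then (0:ℝ) else 1)
  rw [Fintype.piFinset_univ] at h
  rw [← h]
  exact Finset.prod_congr rfl fun i _ => sum_bool_mid _ _

lemma sum_left (y z : Cube n) :
    ∑ x : Cube n, wInd n x y z = ∏ i, eqw (y i) (z i) := by
  unfold wInd
  have h := Finset.prod_univ_sum (fun _ : Fin n => (univ : Finset Bool))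
      (fun i b => if b = y i ∧ y i = z i then (0:ℝ) else 1)
  rw [Fintype.piFinset_univ] at h
  rw [← h]
  exact Finset.prod_congr rfl fun i _ => sum_bool_left _ _

lemma sum_right (x y : Cube n) :
    ∑ z : Cube n, wInd n x y z = ∏ i, eqw (x i) (y i) := by
  unfold wInd
  have h := Finset.prod_univ_sum (fun _ : Fin n => (univ : Finset Bool))
      (fun i b => if x i = y i ∧ y i = b then (0:ℝ) else 1)
  rw [Fintype.piFinset_univ] at h
  rw [← h]
  exact Finset.prod_congr rfl fun i _ => sum_bool_right _ _

lemma bool_ident (a b c : Bool) :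
    (if a = b ∧ b = c then (1:ℝ) else 0)
     = (if a then (1:ℝ) else 0) * (if c then (1:ℝ) else 0)
     + (1 - if b then (1:ℝ) else 0) * (1 - if c then (1:ℝ) else 0)
     - (if a then (1:ℝ) else 0) * (1 - if b then (1:ℝ) else 0) := by
  cases a <;> cases b <;> cases c <;> norm_num

lemma wInd_of_ok {x y z : Cube n} (h : Profile3Ok n x y z) : wInd n x y z = 1 :=
  Finset.prod_eq_one fun i _ => if_neg (h i)

lemma wInd_of_not_ok {x y z : Cube n} (h : ¬ Profile3Ok n x y z) : wInd n x y z = 0 := by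
  unfold Profile3Ok at h
  push_neg at h
  obtain ⟨k, hk⟩ := h
  exact Finset.prod_eq_zero (Finset.mem_univ k) (if_pos hk)

lemma pointwise (f g h : Cube n → Bool) (x y z : Cube n)
    [Decidable (Profile3Ok n x y z ∧ f x = g y ∧ g y = h z)] :
    (if Profile3Ok n x y z ∧ f x = g y ∧ g y = h z then (1:ℝ) else 0)
      = wInd n x y z * (BR n f x * BR n h z)
        + wInd n x y z * ((1 - BR n g y) * (1 - BR n h z))
        - wInd n x y z * (BR n f x * (1 - BR n g y)) := by
  by_cases hOK : Profile3Ok n x y z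
  · rw [wInd_of_ok hOK]
    simp only [hOK, true_and, one_mul]
    exact bool_ident (f x) (g y) (h z)
  · rw [wInd_of_not_ok hOK]
    simp [hOK]

lemma term1 (f h : Cube n → Bool) :
    cInner n (noiseOp n (1/3) (BR n (flipB n f))) (BR n h) * 6 ^ n
      = ∑ x : Cube n, ∑ z : Cube n, BR n f x * BR n h z * ∏ i, eqw (x i) (z i) := by
  rw [cInner_noise_third]
  rw [sum_cubeNeg (fun u => ∑ v : Cube n, BR n (flipB n f) u * BR n h v * ∏ i, w2 (u i) (v i))]
  refine Finset.sum_congr rfl fun x _ => Finset.sum_congr rfl fun v _ => ?_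
  have h1 : BR n (flipB n f) (cubeNeg n x) = BR n f x := by
    show BR n f (cubeNeg n (cubeNeg n x)) = BR n f x
    rw [cubeNeg_invol]
  rw [h1]
  congr 1
  exact Finset.prod_congr rfl fun i _ => w2_not_left _ _

lemma term2 (g h : Cube n → Bool) :
    cInner n (noiseOp n (1/3) (BR n (notB n g))) (BR n (dualB n h)) * 6 ^ n
      = ∑ y : Cube n, ∑ z : Cube n,
          (1 - BR n g y) * (1 - BR n h z) * ∏ i, eqw (y i) (z i) := by
  rw [cInner_noise_third]
  refine Finset.sum_congr rfl fun y _ => ?_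
  rw [sum_cubeNeg (fun v => BR n (notB n g) y * BR n (dualB n h) v * ∏ i, w2 (y i) (v i))]
  refine Finset.sum_congr rfl fun z _ => ?_
  have h1 : BR n (notB n g) y = 1 - BR n g y := by
    unfold BR notB; cases g y <;> simp
  have h2 : BR n (dualB n h) (cubeNeg n z) = 1 - BR n h z := by
    unfold BR dualB
    have : (fun i => !(cubeNeg n z i)) = z := by funext i; simp [cubeNeg]
    rw [this]
    cases h z <;> simp
  rw [h1, h2]
  congr 1
  exact Finset.prod_congr rfl fun i _ => w2_not_right _ _

lemma term3 (f g : Cube n → Bool) :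
    cInner n (noiseOp n (1/3) (BR n (flipB n f))) (BR n (notB n g)) * 6 ^ n
      = ∑ x : Cube n, ∑ y : Cube n,
          BR n f x * (1 - BR n g y) * ∏ i, eqw (x i) (y i) := by
  rw [cInner_noise_third]
  rw [sum_cubeNeg (fun u => ∑ v : Cube n, BR n (flipB n f) u * BR n (notB n g) v * ∏ i, w2 (u i) (v i))]
  refine Finset.sum_congr rfl fun x _ => Finset.sum_congr rfl fun y _ => ?_
  have h1 : BR n (flipB n f) (cubeNeg n x) = BR n f x := by
    show BR n f (cubeNeg n (cubeNeg n x)) = BR n f x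
    rw [cubeNeg_invol]
  have h2 : BR n (notB n g) y = 1 - BR n g y := by
    unfold BR notB; cases g y <;> simp
  rw [h1, h2]
  congr 1
  exact Finset.prod_congr rfl fun i _ => w2_not_left _ _

lemma tripleA (φ ψ : Cube n → ℝ) :
    ∑ x : Cube n, ∑ y : Cube n, ∑ z : Cube n, wInd n x y z * (φ x * ψ z)
      = ∑ x : Cube n, ∑ z : Cube n, φ x * ψ z * ∏ i, eqw (x i) (z i) := by
  refine Finset.sum_congr rfl fun x _ => ?_
  refine (Finset.sum_comm).trans ?_
  refine Finset.sum_congr rfl fun z _ => ?_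
  rw [← Finset.sum_mul, sum_mid]
  ring

lemma tripleB (φ ψ : Cube n → ℝ) :
    ∑ x : Cube n, ∑ y : Cube n, ∑ z : Cube n, wInd n x y z * (φ y * ψ z)
      = ∑ y : Cube n, ∑ z : Cube n, φ y * ψ z * ∏ i, eqw (y i) (z i) := by
  refine (Finset.sum_comm).trans ?_
  refine Finset.sum_congr rfl fun y _ => ?_
  refine (Finset.sum_comm).trans ?_
  refine Finset.sum_congr rfl fun z _ => ?_
  rw [← Finset.sum_mul, sum_left]
  ring

lemma tripleC (φ ψ : Cube n → ℝ) :
    ∑ x : Cube n, ∑ y : Cube n, ∑ z : Cube n, wInd n x y z * (φ x * ψ y)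
      = ∑ x : Cube n, ∑ y : Cube n, φ x * ψ y * ∏ i, eqw (x i) (y i) := by
  refine Finset.sum_congr rfl fun x _ => Finset.sum_congr rfl fun y _ => ?_
  rw [← Finset.sum_mul, sum_right]
  ring

end Kalai


/-- `P(F) = ⟨T_{1/3} f′, h⟩ + ⟨T_{1/3}(1−g), h̄⟩ − ⟨T_{1/3} f′, 1−g⟩`. -/
theorem kalai_formula_modification2 (n : ℕ) (f g h : Cube n → Bool) :
    PF3 n f g h =
      cInner n (noiseOp n (1 / 3) (BR n (flipB n f))) (BR n h)
      + cInner n (noiseOp n (1 / 3) (BR n (notB n g))) (BR n (dualB n h))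
      - cInner n (noiseOp n (1 / 3) (BR n (flipB n f))) (BR n (notB n g)) := by
  classical
  have h6 : (6:ℝ)^n ≠ 0 := by positivity
  refine mul_right_cancel₀ h6 ?_
  have hL : PF3 n f g h * 6 ^ n
      = (Nat.card {p : Cube n × Cube n × Cube n //
          Profile3Ok n p.1 p.2.1 p.2.2 ∧ f p.1 = g p.2.1 ∧ g p.2.1 = h p.2.2} : ℝ) := by
    unfold PF3
    rw [div_mul_cancel₀ _ h6]
  rw [hL]
  have hcard : (Nat.card {p : Cube n × Cube n × Cube n //
          Profile3Ok n p.1 p.2.1 p.2.2 ∧ f p.1 = g p.2.1 ∧ g p.2.1 = h p.2.2} : ℝ)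
      = ∑ p : Cube n × Cube n × Cube n,
          if Profile3Ok n p.1 p.2.1 p.2.2 ∧ f p.1 = g p.2.1 ∧ g p.2.1 = h p.2.2
          then (1:ℝ) else 0 := by
    rw [Nat.card_eq_fintype_card, Fintype.card_subtype, Finset.card_filter]
    push_cast
    rfl
  rw [hcard]
  have hsum : (∑ p : Cube n × Cube n × Cube n,
        if Profile3Ok n p.1 p.2.1 p.2.2 ∧ f p.1 = g p.2.1 ∧ g p.2.1 = h p.2.2
        then (1:ℝ) else 0)
      = ∑ x : Cube n, ∑ y : Cube n, ∑ z : Cube n,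
          (Kalai.wInd n x y z * (BR n f x * BR n h z)
           + Kalai.wInd n x y z * ((1 - BR n g y) * (1 - BR n h z))
           - Kalai.wInd n x y z * (BR n f x * (1 - BR n g y))) := by
    rw [Fintype.sum_prod_type]
    refine Finset.sum_congr rfl fun x _ => ?_
    rw [Fintype.sum_prod_type]
    exact Finset.sum_congr rfl fun y _ => Finset.sum_congr rfl fun z _ =>
      Kalai.pointwise f g h x y z
  rw [hsum]
  simp only [Finset.sum_add_distrib, Finset.sum_sub_distrib]
  rw [Kalai.tripleA (BR n f) (BR n h), Kalai.tripleB (fun y => 1 - BR n g y) (fun z => 1 - BR n h z),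
    Kalai.tripleC (BR n f) (fun y => 1 - BR n g y)]
  rw [← Kalai.term1 f h, ← Kalai.term2 g h, ← Kalai.term3 f g]
  ring

end
end

section
/- Let F = (f, g, h) be a GSWF on three alternatives with n voters satisfying the IIA condition. Then D_1(F) ≤ E[f] + (1 − E[h]). (Indeed, the GSWF G with choice functions G_{12} = 0, G_{23} = g, G_{31} = 1 always ranks alternative 1 at the bottom, hence lies in F_3(n), and Pr[F ≠ G] ≤ E[f] + (1 − E[h]).) -/
open Finset

noncomputable section

/-- The outcome of the GSWF `(f,g,h)` is transitive on every profile
(membership in `F_3(n)`). -/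
def AlwaysTransitive3 (n : ℕ) (f g h : Cube n → Bool) : Prop :=
  ∀ x y z : Cube n, Profile3Ok n x y z → ¬ (f x = g y ∧ g y = h z)

/-- `Pr[F ≠ G]`: the probability, over a uniform profile, that the triple of pairwise
outcomes of `(f,g,h)` differs from that of `(f',g',h')`. -/
def dist3 (n : ℕ) (f g h f' g' h' : Cube n → Bool) : ℝ :=
  (Nat.card {p : Cube n × Cube n × Cube n //
      Profile3Ok n p.1 p.2.1 p.2.2 ∧
      ¬ (f p.1 = f' p.1 ∧ g p.2.1 = g' p.2.1 ∧ h p.2.2 = h' p.2.2)} : ℝ) / 6 ^ n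

/-- `D_1(F) = min_{G ∈ F_3(n)} Pr[F ≠ G]`. -/
def D1_3 (n : ℕ) (f g h : Cube n → Bool) : ℝ :=
  sInf { r : ℝ | ∃ f' g' h' : Cube n → Bool,
    AlwaysTransitive3 n f' g' h' ∧ r = dist3 n f g h f' g' h' }

/-! The GSWF `G = (0, g, 1)` ranks alternative 1 last on every profile, so it is always
transitive, and `F` differs from `G` only when `f x = 1` or `h z = 0`. Under a uniform profile
each of `x`, `y`, `z` is uniform on the cube, because every value of one of them extends to exactly
`3 ^ n` profiles; the union bound then gives `Pr[F ≠ G] ≤ E[f] + (1 - E[h])`. -/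

instance (n : ℕ) (x y z : Cube n) : Decidable (Profile3Ok n x y z) :=
  inferInstanceAs (Decidable (∀ _, _))

lemma profile3Ok_rotate {n : ℕ} {x y z : Cube n} :
    Profile3Ok n x y z ↔ Profile3Ok n y z x :=
  forall_congr' fun _ => by grind

/-- Each coordinate of the last two votes avoids exactly one of the four pairs. -/
lemma card_filter_profile3Ok_fiber (n : ℕ) (x : Cube n) :
    #{yz : Cube n × Cube n | Profile3Ok n x yz.1 yz.2} = 3 ^ n := by
  have hcoord : ∀ b : Bool, Fintype.card {bc : Bool × Bool // ¬ (b = bc.1 ∧ bc.1 = bc.2)} = 3 := by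
    decide
  let e : {yz : Cube n × Cube n // Profile3Ok n x yz.1 yz.2}
      ≃ ∀ k, {bc : Bool × Bool // ¬ (x k = bc.1 ∧ bc.1 = bc.2)} :=
    ((Equiv.arrowProdEquivProdArrow (Fin n) (fun _ => Bool) (fun _ => Bool)).symm.subtypeEquiv
      fun _ => Iff.rfl).trans (Equiv.subtypePiEquivPi (p := fun k bc => ¬ (x k = bc.1 ∧ bc.1 = bc.2)))
  rw [← Fintype.card_subtype, Fintype.card_congr e, Fintype.card_pi]
  simp only [hcoord, prod_const, card_univ, Fintype.card_fin]

lemma card_filter_profile3Ok_fst (n : ℕ) (s : Cube n → Prop) [DecidablePred s] :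
    #{p : Cube n × Cube n × Cube n | Profile3Ok n p.1 p.2.1 p.2.2 ∧ s p.1}
      = 3 ^ n * #{x | s x} := by
  rw [card_filter, Fintype.sum_prod_type, card_filter, mul_sum]
  refine sum_congr rfl fun x _ => ?_
  by_cases hx : s x
  · simp only [hx, and_true, ← card_filter, card_filter_profile3Ok_fiber, if_true, mul_one]
  · simp [hx]

lemma card_filter_profile3Ok_rotate (n : ℕ) (t : Cube n × Cube n × Cube n → Prop)
    [DecidablePred t] :
    #{p : Cube n × Cube n × Cube n | Profile3Ok n p.1 p.2.1 p.2.2 ∧ t (p.2.1, p.2.2, p.1)}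
      = #{p : Cube n × Cube n × Cube n | Profile3Ok n p.1 p.2.1 p.2.2 ∧ t p} := by
  refine card_nbij' (fun p => (p.2.1, p.2.2, p.1)) (fun p => (p.2.2, p.1, p.2.1)) ?_ ?_
    (fun _ _ => rfl) (fun _ _ => rfl)
  · intro p
    simp [← profile3Ok_rotate]
  · intro p
    simp [profile3Ok_rotate]

lemma card_filter_profile3Ok_snd (n : ℕ) (s : Cube n → Prop) [DecidablePred s] :
    #{p : Cube n × Cube n × Cube n | Profile3Ok n p.1 p.2.1 p.2.2 ∧ s p.2.1}
      = 3 ^ n * #{x | s x} :=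
  (card_filter_profile3Ok_rotate n fun p => s p.1).trans (card_filter_profile3Ok_fst n s)

lemma card_filter_profile3Ok_thd (n : ℕ) (s : Cube n → Prop) [DecidablePred s] :
    #{p : Cube n × Cube n × Cube n | Profile3Ok n p.1 p.2.1 p.2.2 ∧ s p.2.2}
      = 3 ^ n * #{x | s x} :=
  (card_filter_profile3Ok_rotate n fun p => s p.2.1).trans (card_filter_profile3Ok_snd n s)

lemma cExp_BR (n : ℕ) (f : Cube n → Bool) : cExp n (BR n f) = #{x | f x = true} / 2 ^ n := by
  simp only [cExp, BR, sum_boole]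

lemma cExp_BR_not (n : ℕ) (f : Cube n → Bool) :
    cExp n (BR n fun x => !f x) = 1 - cExp n (BR n f) := by
  have hBR : ∀ x, BR n (fun x => !f x) x = 1 - BR n f x := fun x => by
    cases hf : f x <;> simp [BR, hf]
  simp only [cExp, hBR, sum_sub_distrib, sum_const, card_univ, Fintype.card_fun,
    Fintype.card_bool, Fintype.card_fin, nsmul_eq_mul, mul_one, Nat.cast_pow, Nat.cast_ofNat]
  field_simp

lemma dist3_le (n : ℕ) (f g h f' g' h' : Cube n → Bool) :
    dist3 n f g h f' g' h' ≤ cExp n (BR n fun x => f x != f' x)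
      + cExp n (BR n fun y => g y != g' y) + cExp n (BR n fun z => h z != h' z) := by
  set A := #{p : Cube n × Cube n × Cube n | Profile3Ok n p.1 p.2.1 p.2.2 ∧ f p.1 ≠ f' p.1}
  set B := #{p : Cube n × Cube n × Cube n | Profile3Ok n p.1 p.2.1 p.2.2 ∧ g p.2.1 ≠ g' p.2.1}
  set C := #{p : Cube n × Cube n × Cube n | Profile3Ok n p.1 p.2.1 p.2.2 ∧ h p.2.2 ≠ h' p.2.2}
  have hA : A = 3 ^ n * #{x | f x ≠ f' x} := card_filter_profile3Ok_fst n (fun x => f x ≠ f' x)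
  have hB : B = 3 ^ n * #{y | g y ≠ g' y} := card_filter_profile3Ok_snd n (fun y => g y ≠ g' y)
  have hC : C = 3 ^ n * #{z | h z ≠ h' z} := card_filter_profile3Ok_thd n (fun z => h z ≠ h' z)
  have hunion : Nat.card {p : Cube n × Cube n × Cube n // Profile3Ok n p.1 p.2.1 p.2.2 ∧
      ¬ (f p.1 = f' p.1 ∧ g p.2.1 = g' p.2.1 ∧ h p.2.2 = h' p.2.2)} ≤ A + B + C := by
    rw [Nat.card_eq_fintype_card, Fintype.card_subtype]
    refine (card_le_card fun p hp => ?_).trans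
      ((card_union_le _ _).trans (Nat.add_le_add_right (card_union_le _ _) _))
    simp only [mem_filter, mem_univ, true_and, mem_union] at hp ⊢
    tauto
  have hsix : (6 : ℝ) ^ n = 3 ^ n * 2 ^ n := by rw [← mul_pow]; norm_num
  simp only [cExp_BR, bne_iff_ne, ne_eq, ← add_div]
  rw [dist3, div_le_div_iff₀ (by positivity) (by positivity), hsix]
  calc (Nat.card _ : ℝ) * 2 ^ n ≤ ((A + B + C : ℕ) : ℝ) * 2 ^ n := by gcongr
    _ = _ := by
      push_cast [hA, hB, hC]
      ring

lemma D1_3_le_dist3 {n : ℕ} {f g h f' g' h' : Cube n → Bool}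
    (hG : AlwaysTransitive3 n f' g' h') : D1_3 n f g h ≤ dist3 n f g h f' g' h' :=
  csInf_le ⟨0, by rintro _ ⟨_, _, _, _, rfl⟩; unfold dist3; positivity⟩ ⟨f', g', h', hG, rfl⟩

lemma alwaysTransitive3_bottom (n : ℕ) (g : Cube n → Bool) :
    AlwaysTransitive3 n (fun _ => false) g (fun _ => true) := by
  rintro _ y _ _ ⟨hfg, hgh⟩
  exact Bool.false_ne_true (hfg.trans hgh)

/-- For any IIA GSWF `(f,g,h)` on three alternatives, `D₁(F) ≤ E[f] + (1 − E[h])`. -/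
theorem D1_le_of_choice_expectations (n : ℕ) (f g h : Cube n → Bool) :
    D1_3 n f g h ≤ cExp n (BR n f) + (1 - cExp n (BR n h)) := by
  have hf : cExp n (BR n fun x => f x != false) = cExp n (BR n f) := by simp only [Bool.bne_false]
  have hg : cExp n (BR n fun y => g y != g y) = 0 := by simp [cExp, BR]
  have hh : cExp n (BR n fun z => h z != true) = 1 - cExp n (BR n h) := by
    simp only [Bool.bne_true, cExp_BR_not]
  calc D1_3 n f g h ≤ dist3 n f g h (fun _ => false) g (fun _ => true) :=
        D1_3_le_dist3 (alwaysTransitive3_bottom n g)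
    _ ≤ _ := dist3_le n f g h _ _ _
    _ = _ := by rw [hf, hg, hh, add_zero]

end
end

section
/- Let f, g : {0,1}^n → {0,1} with E[f] = p₁ ∈ (0,1) and E[g] = p₂ = p₁^α for some α ≥ 0. Then for every 0 < ε < 1, ∑_{S ⊆ {1,…,n}} ε^{|S|} f̂(S) ĝ(S) ≥ p₁ · p₁^{(√α + ε)² / (1 − ε²)}. -/
open Finset

noncomputable section

/-!
Write the Fourier sum as `E[f(x) g(y)]` for an `ε`-correlated pair `(x, y)` of uniform points of
the cube. Two-function reverse hypercontractivity bounds this from below by `‖f‖_p ‖g‖_q` whenever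
`0 < p, q ≤ 1` and `ε² ≤ (1 - p)(1 - q)`. The inequality tensorizes, so it suffices to prove it on
a single bit; there, after normalizing, it comes down to the elementary
`(1 + u)^r - (1 - u)^r ≥ 2ru(1 - u²)^((r-1)/2)` for `r ≥ 1`, i.e. to `s sinh x ≤ sinh (s x)` for
`s ≥ 1`, `x ≥ 0`. For Boolean `f` one has `‖f‖_p = E[f]^(1/p)`, and choosing
`p = (1 - ε²)/(1 + ε√α)`, `q = √α(1 - ε²)/(√α + ε)` makes `ε² = (1 - p)(1 - q)` and
`p₁^(1/p) (p₁^α)^(1/q) = p₁ · p₁^((√α + ε)²/(1 - ε²))`. When `α = 0`, `g ≡ 1` and the sum is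
`E[f] = p₁`.
-/

open Real

lemma Real.mul_sinh_le_sinh_mul {s x : ℝ} (hs : 1 ≤ s) (hx : 0 ≤ x) :
    s * sinh x ≤ sinh (s * x) := by
  have hderiv : ∀ t, HasDerivAt (fun t => sinh (s * t) - s * sinh t)
      (s * (cosh (s * t) - cosh t)) t := fun t => by
    refine ((((hasDerivAt_id' t).const_mul s).sinh).sub
      ((hasDerivAt_sinh t).const_mul s)).congr_deriv ?_
    ring
  have hmono : MonotoneOn (fun t => sinh (s * t) - s * sinh t) (Set.Ici 0) := by
    refine monotoneOn_of_deriv_nonneg (convex_Ici 0)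
      (HasDerivAt.continuousOn fun t _ => hderiv t)
      (fun t _ => (hderiv t).differentiableAt.differentiableWithinAt) fun t ht => ?_
    rw [interior_Ici, Set.mem_Ioi] at ht
    rw [(hderiv t).deriv]
    have : cosh t ≤ cosh (s * t) := by
      rw [cosh_le_cosh, abs_of_pos ht, abs_of_pos (by positivity)]
      nlinarith
    nlinarith
  simpa using hmono Set.self_mem_Ici hx hx

lemma mul_sub_mul_rpow_le_rpow_sub_rpow {s P M : ℝ} (hs : 1 ≤ s) (hM : 0 < M) (hMP : M ≤ P) :
    s * (P - M) * (P * M) ^ ((s - 1) / 2) ≤ P ^ s - M ^ s := by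
  obtain ⟨a, rfl⟩ : ∃ a, P = exp a := ⟨log P, (exp_log (hM.trans_le hMP)).symm⟩
  obtain ⟨b, rfl⟩ : ∃ b, M = exp b := ⟨log M, (exp_log hM).symm⟩
  obtain ⟨L, x, rfl, rfl⟩ : ∃ L x, a = L + x ∧ b = L - x :=
    ⟨(a + b) / 2, (a - b) / 2, by ring, by ring⟩
  have hx : 0 ≤ x := by rw [exp_le_exp] at hMP; linarith
  calc s * (exp (L + x) - exp (L - x)) * (exp (L + x) * exp (L - x)) ^ ((s - 1) / 2)
      = 2 * exp (s * L) * (s * sinh x) := by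
        rw [← exp_add, ← exp_mul, sinh_eq]
        ring_nf
        simp only [exp_add, exp_sub, exp_neg]
        field_simp
    _ ≤ 2 * exp (s * L) * sinh (s * x) := by gcongr; exact mul_sinh_le_sinh_mul hs hx
    _ = exp (L + x) ^ s - exp (L - x) ^ s := by
        rw [← exp_mul, ← exp_mul, sinh_eq]
        ring_nf
        simp only [exp_add, exp_sub, exp_neg]
        field_simp

lemma two_mul_mul_sub_mul_rpow_le {r P M : ℝ} (hr : 1 ≤ r) (hM : 0 < M) (hMP : M ≤ P) :
    2 * r * (P - M) * (P * M) ^ (r - 1) ≤ (P ^ r - M ^ r) * (P ^ (r - 1) + M ^ (r - 1)) := by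
  have hP : 0 < P := hM.trans_le hMP
  have h := mul_sub_mul_rpow_le_rpow_sub_rpow (s := 2 * r - 1) (by linarith) hM hMP
  have hsplit : ∀ {X : ℝ}, 0 < X →
      X ^ r = X * X ^ (r - 1) ∧ X ^ (2 * r - 1) = X * (X ^ (r - 1)) ^ 2 := fun hX => by
      constructor
      · rw [← rpow_one_add' hX.le (by linarith)]; ring_nf
      · rw [← rpow_natCast, ← rpow_mul hX.le, ← rpow_one_add' hX.le (by nlinarith)]; ring_nf
  rw [show (2 * r - 1 - 1) / 2 = r - 1 by ring, mul_rpow hP.le hM.le, (hsplit hP).2,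
    (hsplit hM).2] at h
  rw [mul_rpow hP.le hM.le, (hsplit hP).1, (hsplit hM).1]
  nlinarith

lemma four_mul_one_sub_rpow_le_sq {r u : ℝ} (hr : 1 ≤ r) (hu : |u| ≤ 1) :
    4 * r * (1 - (1 - u ^ 2) ^ r) ≤ ((1 + u) ^ r - (1 - u) ^ r) ^ 2 := by
  wlog hu0 : 0 ≤ u generalizing u
  · have := this (u := -u) (by rwa [abs_neg]) (by linarith)
    convert this using 1 <;> ring_nf
  set G : ℝ → ℝ := fun v => ((1 + v) ^ r - (1 - v) ^ r) ^ 2 + 4 * r * (1 - v ^ 2) ^ r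
  have hderiv : ∀ v, HasDerivAt G (2 * r * (((1 + v) ^ r - (1 - v) ^ r)
      * ((1 + v) ^ (r - 1) + (1 - v) ^ (r - 1)) - 4 * r * v * (1 - v ^ 2) ^ (r - 1))) v := by
    intro v
    have hP := ((hasDerivAt_id' v).const_add 1).rpow_const (p := r) (Or.inr hr)
    have hM := ((hasDerivAt_id' v).const_sub 1).rpow_const (p := r) (Or.inr hr)
    have hQ := ((hasDerivAt_pow 2 v).const_sub 1).rpow_const (p := r) (Or.inr hr)
    refine (((hP.sub hM).pow 2).add (hQ.const_mul (4 * r))).congr_deriv ?_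
    simp only [Pi.sub_apply]
    push_cast
    ring
  have hmono : MonotoneOn G (Set.Icc 0 1) := by
    refine monotoneOn_of_deriv_nonneg (convex_Icc 0 1)
      (HasDerivAt.continuousOn fun v _ => hderiv v)
      (fun v _ => (hderiv v).differentiableAt.differentiableWithinAt) fun v hv => ?_
    rw [interior_Icc, Set.mem_Ioo] at hv
    rw [(hderiv v).deriv]
    have key := two_mul_mul_sub_mul_rpow_le (P := 1 + v) (M := 1 - v) hr (by linarith)
      (by linarith)
    rw [show (1 + v) * (1 - v) = 1 - v ^ 2 by ring, show 1 + v - (1 - v) = 2 * v by ring] at key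
    have hr0 : 0 ≤ 2 * r := by linarith
    nlinarith
  have := hmono (Set.left_mem_Icc.2 zero_le_one) ⟨hu0, (abs_le.1 hu).2⟩ hu0
  norm_num [G] at this
  linarith

def powerMean (p a b : ℝ) : ℝ := ((a ^ p + b ^ p) / 2) ^ p⁻¹

lemma powerMean_nonneg (p : ℝ) {a b : ℝ} (ha : 0 ≤ a) (hb : 0 ≤ b) :
    0 ≤ powerMean p a b :=
  rpow_nonneg (by positivity) _

lemma one_sub_mul_sq_add_four_le {p u : ℝ} (hp0 : 0 < p) (hp1 : p ≤ 1) (hu : |u| ≤ 1) :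
    (1 - p) * ((1 + u) ^ p⁻¹ - (1 - u) ^ p⁻¹) ^ 2 + 4 ≤
      ((1 + u) ^ p⁻¹ + (1 - u) ^ p⁻¹) ^ 2 := by
  have h := four_mul_one_sub_rpow_le_sq (one_le_inv₀ hp0 |>.2 hp1) hu
  have hprod : (1 + u) ^ p⁻¹ * (1 - u) ^ p⁻¹ = (1 - u ^ 2) ^ p⁻¹ := by
    rw [← mul_rpow (by linarith [(abs_le.1 hu).1]) (by linarith [(abs_le.1 hu).2])]; ring_nf
  rw [mul_comm 4, mul_assoc, ← div_eq_inv_mul, div_le_iff₀' hp0] at h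
  nlinarith

lemma one_sub_mul_sq_add_sq_powerMean_le {p a b : ℝ} (hp0 : 0 < p) (hp1 : p ≤ 1)
    (ha : 0 ≤ a) (hb : 0 ≤ b) :
    (1 - p) * (a - b) ^ 2 + (2 * powerMean p a b) ^ 2 ≤ (a + b) ^ 2 := by
  have hA : 0 ≤ a ^ p := rpow_nonneg ha p
  have hB : 0 ≤ b ^ p := rpow_nonneg hb p
  rcases (add_nonneg hA hB).eq_or_lt with hAB | hAB
  · have ha0 : a = 0 := (rpow_eq_zero ha hp0.ne').1 (by linarith)
    have hb0 : b = 0 := (rpow_eq_zero hb hp0.ne').1 (by linarith)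
    simp [powerMean, ha0, hb0, zero_rpow hp0.ne', zero_rpow (inv_ne_zero hp0.ne')]
  set m := (a ^ p + b ^ p) / 2
  set u := (a ^ p - b ^ p) / (a ^ p + b ^ p)
  have hu : |u| ≤ 1 := by
    rw [abs_div, abs_of_pos hAB, div_le_one hAB, abs_le]; constructor <;> linarith
  have hm : 0 ≤ m := by positivity
  have hscale : ∀ {x : ℝ}, 0 ≤ x → ∀ {v : ℝ}, 0 ≤ v →
      m * v = x ^ p → x = m ^ p⁻¹ * v ^ p⁻¹ :=
    fun hx _ hv h => by rw [← mul_rpow hm hv, h, rpow_rpow_inv hx hp0.ne']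
  have ea : a = m ^ p⁻¹ * (1 + u) ^ p⁻¹ :=
    hscale ha (by linarith [(abs_le.1 hu).1]) (by simp only [m, u]; field_simp; ring)
  have eb : b = m ^ p⁻¹ * (1 - u) ^ p⁻¹ :=
    hscale hb (by linarith [(abs_le.1 hu).2]) (by simp only [m, u]; field_simp; ring)
  have h := mul_le_mul_of_nonneg_left (one_sub_mul_sq_add_four_le hp0 hp1 hu)
    (sq_nonneg (m ^ p⁻¹))
  rw [show powerMean p a b = m ^ p⁻¹ from rfl, ea, eb]
  nlinarith

lemma four_mul_le_mul_add_mul_of_sq_le {p q ρ m k X Y D E : ℝ} (hp : p ≤ 1) (hq : q ≤ 1)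
    (hρ : ρ ^ 2 ≤ (1 - p) * (1 - q)) (hk : 0 ≤ k) (hX : 0 ≤ X) (hY : 0 ≤ Y)
    (hXm : (1 - p) * D ^ 2 + (2 * m) ^ 2 ≤ X ^ 2)
    (hYk : (1 - q) * E ^ 2 + (2 * k) ^ 2 ≤ Y ^ 2) :
    4 * m * k ≤ X * Y + ρ * (D * E) := by
  have hmX : 2 * m ≤ X := abs_le_of_sq_le_sq' (by nlinarith) hX |>.2
  have hkY : 2 * k ≤ Y := abs_le_of_sq_le_sq' (by nlinarith) hY |>.2
  have hρDE : (ρ * (D * E)) ^ 2 ≤ (X ^ 2 - (2 * m) ^ 2) * (Y ^ 2 - (2 * k) ^ 2) :=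
    calc (ρ * (D * E)) ^ 2 = ρ ^ 2 * (D ^ 2 * E ^ 2) := by ring
      _ ≤ ((1 - p) * (1 - q)) * (D ^ 2 * E ^ 2) := by gcongr
      _ = ((1 - p) * D ^ 2) * ((1 - q) * E ^ 2) := by ring
      _ ≤ _ := mul_le_mul (by linarith) (by linarith) (by nlinarith) (by nlinarith)
  -- `(XY - 4mk)² - (X² - 4m²)(Y² - 4k²) = 4 (Xk - mY)²`
  have hsq : (ρ * (D * E)) ^ 2 ≤ (X * Y - 4 * m * k) ^ 2 := by
    nlinarith [sq_nonneg (X * k - m * Y)]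
  have := abs_le_of_sq_le_sq' hsq (by nlinarith)
  linarith [this.1]

lemma powerMean_mul_powerMean_le {p q ρ a b c d : ℝ} (hp0 : 0 < p) (hp1 : p ≤ 1) (hq0 : 0 < q)
    (hq1 : q ≤ 1) (hρ : ρ ^ 2 ≤ (1 - p) * (1 - q)) (ha : 0 ≤ a) (hb : 0 ≤ b) (hc : 0 ≤ c)
    (hd : 0 ≤ d) :
    powerMean p a b * powerMean q c d ≤
      ((1 + ρ) * (a * c + b * d) + (1 - ρ) * (a * d + b * c)) / 4 := by
  have := four_mul_le_mul_add_mul_of_sq_le hp1 hq1 hρ (powerMean_nonneg q hc hd)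
    (add_nonneg ha hb) (add_nonneg hc hd)
    (one_sub_mul_sq_add_sq_powerMean_le hp0 hp1 ha hb)
    (one_sub_mul_sq_add_sq_powerMean_le hq0 hq1 hc hd)
  linarith

lemma Fintype.sum_fin_succ_pi {α M : Type*} [Fintype α] [AddCommMonoid M] {n : ℕ}
    (F : (Fin (n + 1) → α) → M) : ∑ x, F x = ∑ a, ∑ x : Fin n → α, F (Fin.cons a x) := by
  rw [← (Fin.consEquiv fun _ => α).sum_comp, Fintype.sum_prod_type]
  rfl

def boolSign (b : Bool) : ℝ := 2 * (if b then 1 else 0) - 1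

@[simp] lemma boolSign_true : boolSign true = 1 := by norm_num [boolSign]

@[simp] lemma boolSign_false : boolSign false = -1 := by norm_num [boolSign]

/-- `E[f(x) g(y)]` for a `ρ`-correlated pair: in `±1` notation, `∏ i, (1 + ρ x_i y_i)` is the
density of the pair with respect to the uniform measure on `Cube n × Cube n`. -/
def noiseCorr (n : ℕ) (ρ : ℝ) (f g : Cube n → ℝ) : ℝ :=
  (∑ x, ∑ y, f x * g y * ∏ i, (1 + ρ * (boolSign (x i) * boolSign (y i)))) / 4 ^ n

def cNorm (n : ℕ) (p : ℝ) (f : Cube n → ℝ) : ℝ := (cExp n fun x => f x ^ p) ^ p⁻¹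

lemma noiseCorr_eq_sum_fcoef (n : ℕ) (ρ : ℝ) (f g : Cube n → ℝ) :
    noiseCorr n ρ f g = ∑ S, ρ ^ #S * fcoef n f S * fcoef n g S := by
  have hkernel : ∀ x y : Cube n, ∏ i, (1 + ρ * (boolSign (x i) * boolSign (y i)))
      = ∑ S, ρ ^ #S * (walsh n S x * walsh n S y) := fun x y => by
    simp only [prod_one_add, powerset_univ, prod_mul_distrib, prod_const, walsh, boolSign]
  have hcoef : ∀ S, ρ ^ #S * fcoef n f S * fcoef n g S
      = (∑ x, ∑ y, f x * g y * (ρ ^ #S * (walsh n S x * walsh n S y))) / 4 ^ n := fun S => by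
    calc ρ ^ #S * fcoef n f S * fcoef n g S
        = (∑ x, ρ ^ #S * (f x * walsh n S x)) * (∑ y, g y * walsh n S y) / (2 * 2) ^ n := by
          rw [fcoef, fcoef, cInner, cInner, ← mul_sum, mul_pow]; ring
      _ = _ := by
          rw [sum_mul_sum]; norm_num only
          exact congrArg (· / _) (sum_congr rfl fun x _ => sum_congr rfl fun y _ => by ring)
  simp only [hcoef, ← sum_div, noiseCorr, hkernel, mul_sum]
  exact congrArg (· / _) ((sum_congr rfl fun x _ => sum_comm).trans sum_comm)

lemma cExp_succ {n : ℕ} (F : Cube (n + 1) → ℝ) :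
    cExp (n + 1) F =
      (cExp n (fun x => F (Fin.cons false x)) + cExp n (fun x => F (Fin.cons true x))) / 2 := by
  simp only [cExp, Fintype.sum_fin_succ_pi F, Fintype.sum_bool, pow_succ]
  field_simp
  ring

lemma cExp_nonneg {n : ℕ} {f : Cube n → ℝ} (hf : ∀ x, 0 ≤ f x) : 0 ≤ cExp n f :=
  div_nonneg (sum_nonneg fun x _ => hf x) (by positivity)

lemma cNorm_nonneg {n : ℕ} (p : ℝ) {f : Cube n → ℝ} (hf : ∀ x, 0 ≤ f x) :
    0 ≤ cNorm n p f :=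
  rpow_nonneg (cExp_nonneg fun x => rpow_nonneg (hf x) p) _

lemma cNorm_succ {n : ℕ} {p : ℝ} (hp : p ≠ 0) {f : Cube (n + 1) → ℝ} (hf : ∀ x, 0 ≤ f x) :
    cNorm (n + 1) p f = powerMean p (cNorm n p fun x => f (Fin.cons false x))
      (cNorm n p fun x => f (Fin.cons true x)) := by
  have hE : ∀ b, 0 ≤ cExp n fun x => f (Fin.cons b x) ^ p :=
    fun b => cExp_nonneg fun x => rpow_nonneg (hf _) p
  rw [cNorm, powerMean, cNorm, cNorm, cExp_succ, rpow_inv_rpow (hE false) hp,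
    rpow_inv_rpow (hE true) hp]

lemma noiseCorr_succ {n : ℕ} (ρ : ℝ) (f g : Cube (n + 1) → ℝ) :
    noiseCorr (n + 1) ρ f g =
      ((1 + ρ) * (noiseCorr n ρ (fun x => f (Fin.cons false x)) (fun y => g (Fin.cons false y))
          + noiseCorr n ρ (fun x => f (Fin.cons true x)) (fun y => g (Fin.cons true y)))
        + (1 - ρ) * (noiseCorr n ρ (fun x => f (Fin.cons false x)) (fun y => g (Fin.cons true y))
          + noiseCorr n ρ (fun x => f (Fin.cons true x)) (fun y => g (Fin.cons false y)))) / 4 := by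
  simp only [noiseCorr, Fintype.sum_fin_succ_pi, Fintype.sum_bool, Fin.prod_univ_succ,
    Fin.cons_zero, Fin.cons_succ, boolSign_true, boolSign_false, sum_add_distrib,
    mul_left_comm _ (1 + ρ * _), ← mul_sum, pow_succ]
  ring

theorem cNorm_mul_cNorm_le_noiseCorr {p q ρ : ℝ} (hp0 : 0 < p) (hp1 : p ≤ 1) (hq0 : 0 < q)
    (hq1 : q ≤ 1) (hρ : ρ ^ 2 ≤ (1 - p) * (1 - q)) {n : ℕ} {f g : Cube n → ℝ}
    (hf : ∀ x, 0 ≤ f x) (hg : ∀ y, 0 ≤ g y) :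
    cNorm n p f * cNorm n q g ≤ noiseCorr n ρ f g := by
  have hρ1 : |ρ| ≤ 1 := (sq_le_one_iff_abs_le_one ρ).1 (by nlinarith)
  induction n with
  | zero =>
    simp [cNorm, cExp, noiseCorr, rpow_rpow_inv (hf _) hp0.ne', rpow_rpow_inv (hg _) hq0.ne']
  | succ n ih =>
    rw [cNorm_succ hp0.ne' hf, cNorm_succ hq0.ne' hg, noiseCorr_succ]
    refine (powerMean_mul_powerMean_le hp0 hp1 hq0 hq1 hρ (cNorm_nonneg p fun _ => hf _)
      (cNorm_nonneg p fun _ => hf _) (cNorm_nonneg q fun _ => hg _)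
      (cNorm_nonneg q fun _ => hg _)).trans ?_
    gcongr <;> first | exact ih (fun _ => hf _) (fun _ => hg _) | linarith [abs_le.1 hρ1]

lemma noiseCorr_const_one_right (n : ℕ) (ρ : ℝ) (f : Cube n → ℝ) :
    noiseCorr n ρ f (fun _ => 1) = cExp n f := by
  have hmarg : ∀ x : Cube n,
      ∑ y : Cube n, ∏ i, (1 + ρ * (boolSign (x i) * boolSign (y i))) = 2 ^ n := fun x => by
      rw [← Fintype.prod_sum fun i b => 1 + ρ * (boolSign (x i) * boolSign b)]
      simp only [Fintype.sum_bool, boolSign_true, boolSign_false]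
      ring_nf
      simp
  simp only [noiseCorr, cExp, mul_one, ← mul_sum, hmarg, ← sum_mul]
  rw [show (4 : ℝ) ^ n = 2 ^ n * 2 ^ n by rw [← mul_pow]; norm_num]
  field_simp

lemma BR_nonneg {n : ℕ} (f : Cube n → Bool) (x : Cube n) : 0 ≤ BR n f x := by
  unfold BR; split_ifs <;> norm_num

lemma BR_rpow {n : ℕ} (f : Cube n → Bool) {p : ℝ} (hp : p ≠ 0) (x : Cube n) :
    BR n f x ^ p = BR n f x := by
  unfold BR; split_ifs <;> simp [zero_rpow hp]

lemma cNorm_BR {n : ℕ} (f : Cube n → Bool) {p : ℝ} (hp : p ≠ 0) :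
    cNorm n p (BR n f) = cExp n (BR n f) ^ p⁻¹ := by
  simp only [cNorm, BR_rpow f hp]

lemma BR_eq_one_of_cExp_eq_one {n : ℕ} {f : Cube n → Bool} (h : cExp n (BR n f) = 1) :
    BR n f = fun _ => 1 := by
  have hsum : ∑ x, (1 - BR n f x) = 0 := by
    rw [cExp, div_eq_one_iff_eq (by positivity)] at h
    simp [sum_sub_distrib, h]
  funext x
  have := (sum_eq_zero_iff_of_nonneg fun x _ => ?_).1 hsum x (mem_univ x)
  · linarith
  · unfold BR; split_ifs <;> norm_num

/-- **Reverse hypercontractive lower bound on noise correlation**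
(Mossel–O'Donnell–Regev–Steif–Sudakov, Corollary 3.5). If `E[f] = p₁ ∈ (0,1)` and
`E[g] = p₁^α` with `α ≥ 0`, then for all `0 < ε < 1`,
`∑_S ε^{|S|} f̂(S) ĝ(S) ≥ p₁ · p₁^{(√α+ε)²/(1−ε²)}`. -/
theorem noise_correlation_lower_bound (n : ℕ) (f g : Cube n → Bool) (p₁ α : ℝ)
    (hp0 : 0 < p₁) (hp1 : p₁ < 1) (hα : 0 ≤ α)
    (hf : cExp n (BR n f) = p₁) (hg : cExp n (BR n g) = p₁ ^ α)
    (ε : ℝ) (hε0 : 0 < ε) (hε1 : ε < 1) :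
    p₁ * p₁ ^ ((Real.sqrt α + ε) ^ 2 / (1 - ε ^ 2)) ≤
      ∑ S : Finset (Fin n), ε ^ S.card * fcoef n (BR n f) S * fcoef n (BR n g) S := by
  rw [← noiseCorr_eq_sum_fcoef]
  have hε : 0 < 1 - ε ^ 2 := by nlinarith
  rcases hα.eq_or_lt with rfl | hα0
  · rw [BR_eq_one_of_cExp_eq_one (hg.trans (rpow_zero p₁)), noiseCorr_const_one_right, hf]
    exact mul_le_of_le_one_right hp0.le (rpow_le_one hp0.le hp1.le (by positivity))
  set s := √α
  have hs : 0 < s := sqrt_pos.2 hα0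
  -- the exponents for which `ε² = (1 - p)(1 - q)` and `1/p + α/q = 1 + (√α + ε)²/(1 - ε²)`
  set p := (1 - ε ^ 2) / (1 + ε * s)
  set q := s * (1 - ε ^ 2) / (s + ε)
  have hp : 0 < p ∧ p ≤ 1 := ⟨by positivity, div_le_one (by positivity) |>.2 (by nlinarith)⟩
  have hq : 0 < q ∧ q ≤ 1 := ⟨by positivity, div_le_one (by positivity) |>.2 (by nlinarith)⟩
  have hρ : ε ^ 2 ≤ (1 - p) * (1 - q) := le_of_eq (by simp only [p, q]; field_simp; ring)
  have h := cNorm_mul_cNorm_le_noiseCorr hp.1 hp.2 hq.1 hq.2 hρ (BR_nonneg f) (BR_nonneg g)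
  rw [cNorm_BR f hp.1.ne', cNorm_BR g hq.1.ne', hf, hg, ← rpow_mul hp0.le, ← rpow_add hp0] at h
  convert h using 2
  rw [← rpow_one_add' hp0.le (by positivity)]
  congr 1
  simp only [p, q]
  field_simp
  rw [← sq_sqrt hα]
  ring
end
end

section
/- (Mossel's reduction lemma) Let δ₀ : (0,1] → (0,1] be a function such that for every n ≥ 1, every GSWF F on three alternatives with n voters satisfying the IIA condition, and every ε ∈ (0,1], P(F) ≤ δ₀(ε) implies D_1(F) ≤ ε. Then for every k ≥ 3, every n ≥ 1, every GSWF F on k alternatives with n voters satisfying the IIA condition, and every ε ∈ (0,1], P(F) ≤ δ₀(ε/k²) implies D_1(F) ≤ ε. -/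
/-!
Restrict `F` to a triple `i < j < l` of alternatives. The restriction is non-transitive no more
often than `F`, so by hypothesis it is `β`-close, `β = ε / k²`, to a transitive IIA function `G`
on three alternatives. By Wilson's classification of these, either all three pairwise functions
of `G` are the same (anti-)dictatorship, or two of them are constants that pin one alternative
at the top or the bottom; either way, transitivity of `G` only involves its pairwise functions
lying in `G_2(n)`. Distinct members of `G_2(n)` are at distance at least `1/2` and `β < 1/4`, so
the member of `G_2(n)` that `F_ij` is `β`-close to does not depend on the triple. Replacing every
`F_ij` by it, when it exists, gives a GSWF that is transitive on every triple, hence transitive,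
and that differs from `F` with probability at most `k² β = ε`.
-/

open Finset

noncomputable section

/-- Membership in `G_2(n)`: constant functions, dictatorships and anti-dictatorships. -/
def IsG2 (n : ℕ) (G : Cube n → Bool) : Prop :=
  (∃ b, ∀ x, G x = b) ∨ (∃ m, ∀ x, G x = x m) ∨ (∃ m, ∀ x, G x = !(x m))

/-- `Pr[f ≠ G]` over the uniform measure on the cube. -/
def distB (n : ℕ) (f G : Cube n → Bool) : ℝ :=
  (Nat.card {x : Cube n // f x ≠ G x} : ℝ) / 2 ^ n

/-- The vector of individual preferences between alternatives `i` and `j`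
induced by the profile `σ` (voter `v` prefers `i` over `j` iff `σ v i < σ v j`). -/
def prefInput (k n : ℕ) (σ : Fin n → Equiv.Perm (Fin k)) (i j : Fin k) : Cube n :=
  fun v => decide (σ v i < σ v j)

/-- The outcome of the IIA GSWF `F` on the profile `σ` is transitive, i.e. the
pairwise preferences coincide with those of some linear order `π`. -/
def TransOutcome (k n : ℕ) (F : Fin k → Fin k → Cube n → Bool)
    (σ : Fin n → Equiv.Perm (Fin k)) : Prop :=
  ∃ π : Equiv.Perm (Fin k), ∀ i j : Fin k, i < j →
    F i j (prefInput k n σ i j) = decide (π i < π j)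

/-- Probability of a non-transitive outcome for a uniformly random profile. -/
def PFk (k n : ℕ) (F : Fin k → Fin k → Cube n → Bool) : ℝ :=
  (Nat.card {σ : Fin n → Equiv.Perm (Fin k) // ¬ TransOutcome k n F σ} : ℝ)
    / (Nat.factorial k : ℝ) ^ n

/-- `Pr[F ≠ G]`: the probability, over a uniform profile, that the vectors of
pairwise outcomes of `F` and `G` differ. -/
def distk (k n : ℕ) (F G : Fin k → Fin k → Cube n → Bool) : ℝ :=
  (Nat.card {σ : Fin n → Equiv.Perm (Fin k) //
      ∃ i j : Fin k, i < j ∧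
        F i j (prefInput k n σ i j) ≠ G i j (prefInput k n σ i j)} : ℝ)
    / (Nat.factorial k : ℝ) ^ n

/-- `D_1(F) = min_{G ∈ F_k(n)} Pr[F ≠ G]`. -/
def D1k (k n : ℕ) (F : Fin k → Fin k → Cube n → Bool) : ℝ :=
  sInf { r : ℝ | ∃ G : Fin k → Fin k → Cube n → Bool,
    (∀ σ, TransOutcome k n G σ) ∧ r = distk k n F G }

/-- `TransTriple a b c`: the outcomes `a, b, c` on the pairs `(0,1), (0,2), (1,2)` of three
alternatives are not a cycle. -/
abbrev TransTriple (a b c : Bool) : Prop := a = c → b = a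

/-- Not all equal. Since `TransTriple a b c ↔ Nae a (!b) c` and `Nae` is symmetric in its
arguments, the polymorphisms of `TransTriple` are classified through those of `Nae`. -/
abbrev Nae (a b c : Bool) : Prop := ¬(a = b ∧ b = c)

section Polymorphisms

variable {n : ℕ}

def PreservesTransTriple (f g h : Cube n → Bool) : Prop :=
  ∀ x y z : Cube n, (∀ v, TransTriple (x v) (y v) (z v)) → TransTriple (f x) (g y) (h z)

def PreservesNae (f g h : Cube n → Bool) : Prop :=
  ∀ x y z : Cube n, (∀ v, Nae (x v) (y v) (z v)) → Nae (f x) (g y) (h z)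

def dict (m : Fin n) (s : Bool) : Cube n → Bool := fun x => xor (x m) s

def dual (f : Cube n → Bool) : Cube n → Bool := fun x => !f (fun v => !x v)

@[simp] lemma dual_dual (f : Cube n → Bool) : dual (dual f) = f := by
  funext x; simp [dual]

@[simp] lemma dual_dict (m : Fin n) (s : Bool) : dual (dict m s) = dict m s := by
  funext x; simp [dual, dict]

@[simp] lemma dual_const (b : Bool) : dual (fun _ : Cube n => b) = fun _ => !b := rfl

lemma dual_apply_not (f : Cube n → Bool) (x : Cube n) : dual f (fun v => !x v) = !f x := by
  simp [dual]

lemma nae_not_right (a b : Bool) : Nae a b (!a) := by cases a <;> cases b <;> simp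

namespace PreservesNae

variable {f g h : Cube n → Bool}

lemma swap12 (H : PreservesNae f g h) : PreservesNae g f h := fun x y z hxyz =>
  have key := H y x z fun v => by have := hxyz v; grind
  by grind

lemma swap23 (H : PreservesNae f g h) : PreservesNae f h g := fun x y z hxyz =>
  have key := H x z y fun v => by have := hxyz v; grind
  by grind

lemma const_of_const (H : PreservesNae f g h) {b : Bool} (hg : g = fun _ => b) :
    (f = fun _ => !b) ∨ (h = fun _ => !b) := by
  by_contra! hne
  obtain ⟨x, hx⟩ := Function.ne_iff.1 hne.1
  obtain ⟨z, hz⟩ := Function.ne_iff.1 hne.2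
  have := H x (fun v => !x v) z fun v => by cases x v <;> simp
  simp_all

lemma dual_eq_of_nonconst (H : PreservesNae f g h) (hg : ∀ b, g ≠ fun _ => b) : h = dual f := by
  funext y
  by_contra hne
  refine hg (!f fun v => !y v) (funext fun x => ?_)
  have key := H (fun v => !y v) x y fun v => by cases y v <;> simp
  have hy : h y = f (fun v => !y v) := by simpa [dual] using hne
  rw [hy] at key
  exact Bool.eq_not_iff.2 fun hx => key ⟨hx.symm, hx⟩

lemma exists_flip_ne (hf : ∀ b, f ≠ fun _ => b) :
    ∃ u m, f (Function.update u m (!u m)) ≠ f u := by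
  by_contra! hflip
  have hupd : ∀ u m b, f (Function.update u m b) = f u := by
    intro u m b
    rcases Bool.eq_or_eq_not b (u m) with rfl | rfl
    · rw [Function.update_eq_self]
    · exact hflip u m
  obtain ⟨x, y, hxy⟩ : ∃ x y, f x ≠ f y := by
    by_contra! hc
    exact hf (f fun _ => false) (funext fun x => hc x _)
  have hpiece : ∀ s : Finset (Fin n), f (s.piecewise x y) = f y := fun s => by
    induction s using Finset.induction_on with
    | empty => simp
    | insert m s _ ih => rw [Finset.piecewise_insert, hupd, ih]
  exact hxy (by simpa using hpiece Finset.univ)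

lemma eq_dict_of_dual (H : PreservesNae f (dual f) (dual f)) (hf : ∀ b, f ≠ fun _ => b) :
    ∃ m s, f = dict m s := by
  obtain ⟨u, m, hedge⟩ := exists_flip_ne hf
  set u' := Function.update u m (!u m)
  have hsame : ∀ x, x m = u m → f x = f u := fun x hx => by
    by_contra hne
    have key := H u (fun v => !x v) (fun v => !u' v) fun v => by
      rcases eq_or_ne v m with rfl | hv
      · simp [u', hx]
      · simpa [u', hv] using nae_not_right (u v) (!x v)
    rw [dual_apply_not, dual_apply_not] at key
    simp [Bool.eq_not_iff.2 hne, Bool.eq_not_iff.2 hedge] at key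
  have hdiff : ∀ x, x m ≠ u m → f x ≠ f u := fun x hx heq => by
    have key := H u' (fun v => !u v) (fun v => !x v) fun v => by
      rcases eq_or_ne v m with rfl | hv
      · simp [u', Bool.eq_not_iff.2 hx]
      · simp [u', hv]
    rw [dual_apply_not, dual_apply_not, heq] at key
    simp [Bool.eq_not_iff.2 hedge] at key
  refine ⟨m, xor (u m) (f u), funext fun x => ?_⟩
  by_cases hx : x m = u m
  · simp [dict, hx, hsame x hx]
  · simp [dict, Bool.eq_not_iff.2 hx, Bool.eq_not_iff.2 (hdiff x hx)]

theorem classify (H : PreservesNae f g h) :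
    (∃ m s, f = dict m s ∧ g = dict m s ∧ h = dict m s) ∨
    (∃ b, (f = fun _ => b) ∧ g = fun _ => !b) ∨
    (∃ b, (f = fun _ => b) ∧ h = fun _ => !b) ∨
    (∃ b, (g = fun _ => b) ∧ h = fun _ => !b) := by
  by_cases hg : ∃ b, g = fun _ => b
  · obtain ⟨b, rfl⟩ := hg
    rcases H.const_of_const rfl with hf | hh
    · exact Or.inr (Or.inl ⟨!b, hf, by simp⟩)
    · exact Or.inr (Or.inr (Or.inr ⟨b, rfl, hh⟩))
  by_cases hf : ∃ b, f = fun _ => b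
  · obtain ⟨b, rfl⟩ := hf
    rcases H.swap12.const_of_const rfl with hg' | hh
    · exact Or.inr (Or.inl ⟨b, rfl, hg'⟩)
    · exact Or.inr (Or.inr (Or.inl ⟨b, rfl, hh⟩))
  by_cases hh : ∃ b, h = fun _ => b
  · obtain ⟨b, rfl⟩ := hh
    rcases H.swap23.const_of_const rfl with hf' | hg'
    · exact Or.inr (Or.inr (Or.inl ⟨!b, hf', by simp⟩))
    · exact Or.inr (Or.inr (Or.inr ⟨!b, hg', by simp⟩))
  simp only [not_exists] at hg hf hh
  obtain rfl : h = dual f := H.dual_eq_of_nonconst hg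
  obtain rfl : g = dual f := H.swap23.dual_eq_of_nonconst hh
  obtain ⟨m, s, rfl⟩ := H.eq_dict_of_dual hf
  exact Or.inl ⟨m, s, rfl, dual_dict m s, dual_dict m s⟩

end PreservesNae

lemma isG2_const (b : Bool) : IsG2 n fun _ => b := Or.inl ⟨b, fun _ => rfl⟩

lemma isG2_dict (m : Fin n) (s : Bool) : IsG2 n (dict m s) := by
  cases s
  · exact Or.inr (Or.inl ⟨m, fun x => Bool.xor_false (x m)⟩)
  · exact Or.inr (Or.inr ⟨m, fun x => Bool.xor_true (x m)⟩)

lemma transTriple_iff_nae (a b c : Bool) : TransTriple a b c ↔ Nae a (!b) c := by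
  revert a b c; decide

namespace PreservesTransTriple

variable {f g h : Cube n → Bool}

lemma preservesNae_dual (H : PreservesTransTriple f g h) : PreservesNae f (dual g) h :=
  fun x y z hxyz => by
    have key := H x (fun v => !y v) z fun v => (transTriple_iff_nae _ _ _).2 (by simpa using hxyz v)
    exact (transTriple_iff_nae _ _ _).1 key

theorem classify (H : PreservesTransTriple f g h) :
    (∃ m s, f = dict m s ∧ g = dict m s ∧ h = dict m s) ∨
    (∃ b, (f = fun _ => b) ∧ g = fun _ => b) ∨
    (∃ b, (f = fun _ => b) ∧ h = fun _ => !b) ∨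
    (∃ b, (g = fun _ => b) ∧ h = fun _ => b) := by
  rw [← dual_dual g]
  rcases H.preservesNae_dual.classify with ⟨m, s, hf, hg, hh⟩ | ⟨b, hf, hg⟩ | ⟨b, hf, hh⟩ |
      ⟨b, hg, hh⟩
  · exact Or.inl ⟨m, s, hf, by simp [hg], hh⟩
  · exact Or.inr (Or.inl ⟨b, hf, by simp [hg]⟩)
  · exact Or.inr (Or.inr (Or.inl ⟨b, hf, hh⟩))
  · exact Or.inr (Or.inr (Or.inr ⟨!b, by simp [hg], hh⟩))

/-- By the classification, the components of `(f, g, h)` outside `G_2(n)` play no role. -/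
lemma of_eq_of_isG2 (H : PreservesTransTriple f g h) {f' g' h' : Cube n → Bool}
    (hf : IsG2 n f → f' = f) (hg : IsG2 n g → g' = g) (hh : IsG2 n h → h' = h) :
    PreservesTransTriple f' g' h' := by
  rcases H.classify with ⟨m, s, rfl, rfl, rfl⟩ | ⟨b, rfl, rfl⟩ | ⟨b, rfl, rfl⟩ | ⟨b, rfl, rfl⟩
  · rwa [hf (isG2_dict m s), hg (isG2_dict m s), hh (isG2_dict m s)]
  · rw [hf (isG2_const b), hg (isG2_const b)]
    exact fun _ _ _ _ _ => rfl
  · rw [hf (isG2_const b), hh (isG2_const !b)]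
    exact fun _ _ _ _ hb => absurd hb (by cases b <;> simp)
  · rw [hg (isG2_const b), hh (isG2_const b)]
    exact fun _ _ _ _ hb => hb.symm

end PreservesTransTriple

end Polymorphisms

section CubeDistance

variable {n : ℕ}

lemma two_mul_natCard_subtype_of_equiv {α : Type*} [Finite α] {p : α → Prop} (e : α ≃ α)
    (he : ∀ x, p (e x) ↔ ¬p x) : 2 * Nat.card {x // p x} = Nat.card α := by
  classical
  have := Fintype.ofFinite α
  have hswap : Nat.card {x // ¬p x} = Nat.card {x // p x} :=
    Nat.card_congr (e.subtypeEquiv fun x => (he x).symm)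
  simp only [Nat.card_eq_fintype_card, Fintype.card_subtype_compl] at hswap ⊢
  have := Fintype.card_subtype_le p
  omega

lemma natCard_cube : Nat.card (Cube n) = 2 ^ n := by simp

lemma distB_comm (f g : Cube n → Bool) : distB n f g = distB n g f := by
  simp only [distB, ne_comm]

lemma distB_triangle (f g h : Cube n → Bool) : distB n f h ≤ distB n f g + distB n g h := by
  classical
  rw [distB, distB, distB, ← add_div]
  gcongr
  simp only [Nat.card_eq_fintype_card]
  exact_mod_cast (Fintype.card_subtype_mono _ _ fun x (hx : f x ≠ h x) =>
    (em (f x = g x)).elim (fun e => Or.inr (e ▸ hx)) Or.inl).trans (Fintype.card_subtype_or _ _)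

lemma Option.elim_update_not (o : Option (Fin n)) (x : Cube n) (m : Fin n) :
    o.elim false (Function.update x m (!x m)) = xor (o.elim false x) (decide (o = some m)) := by
  rcases o with _ | m'
  · simp
  · rcases eq_or_ne m' m with rfl | hm
    · simp
    · simp [hm]

lemma IsG2.exists_eq_xor {g : Cube n → Bool} (hg : IsG2 n g) :
    ∃ (o : Option (Fin n)) (s : Bool), ∀ x, g x = xor (o.elim false x) s := by
  rcases hg with ⟨b, hb⟩ | ⟨m, hm⟩ | ⟨m, hm⟩
  · exact ⟨none, b, by simpa using hb⟩
  · exact ⟨some m, false, by simpa using hm⟩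
  · exact ⟨some m, true, by simpa using hm⟩

lemma IsG2.eq_of_distB_lt {g g' : Cube n → Bool} (hg : IsG2 n g) (hg' : IsG2 n g')
    (hlt : distB n g g' < 1 / 2) : g = g' := by
  obtain ⟨o, s, hgx⟩ := hg.exists_eq_xor
  obtain ⟨o', s', hgx'⟩ := hg'.exists_eq_xor
  by_contra hne
  refine hlt.not_ge ?_
  rw [distB, div_le_div_iff₀ (by norm_num) (by positivity), one_mul]
  by_cases ho : o = o'
  · subst ho
    have hs : s ≠ s' := by rintro rfl; exact hne (funext fun x => by rw [hgx, hgx'])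
    have hall : ∀ x, g x ≠ g' x := fun x => by simp [hgx, hgx', hs]
    rw [Nat.card_congr (Equiv.subtypeUnivEquiv hall)]
    simp
  · obtain ⟨m, hm⟩ : ∃ m, decide (o = some m) ≠ decide (o' = some m) := by
      rcases o with _ | m
      · obtain ⟨m, rfl⟩ := Option.ne_none_iff_exists'.1 (Ne.symm ho)
        exact ⟨m, by simp⟩
      · exact ⟨m, by simpa [eq_comm] using ho⟩
    have hflip : Function.Involutive fun x : Cube n => Function.update x m (!x m) :=
      fun x => by simp
    have := two_mul_natCard_subtype_of_equiv (p := fun x => g x ≠ g' x) (hflip.toPerm _) fun x => by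
      simp only [Function.Involutive.coe_toPerm, hgx, hgx', Option.elim_update_not]
      revert hm; cases decide (o = some m) <;> cases decide (o' = some m) <;> simp
    rw [natCard_cube] at this
    exact_mod_cast (by omega : 2 ^ n ≤ Nat.card {x // g x ≠ g' x} * 2)

end CubeDistance

section Snap

variable {n : ℕ} {β : ℝ}

open Classical in
def snapToG2 (β : ℝ) (f : Cube n → Bool) : Cube n → Bool :=
  if h : ∃ g, IsG2 n g ∧ distB n f g ≤ β then h.choose else f

lemma snapToG2_eq (hβ : β < 1 / 4) {f g : Cube n → Bool} (hg : IsG2 n g)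
    (hfg : distB n f g ≤ β) : snapToG2 β f = g := by
  have h : ∃ g, IsG2 n g ∧ distB n f g ≤ β := ⟨g, hg, hfg⟩
  rw [snapToG2, dif_pos h]
  refine h.choose_spec.1.eq_of_distB_lt hg ?_
  calc distB n h.choose g ≤ distB n h.choose f + distB n f g := distB_triangle ..
    _ < 1 / 2 := by rw [distB_comm]; linarith [h.choose_spec.2]

lemma distB_snapToG2_le (hβ : 0 ≤ β) (f : Cube n → Bool) : distB n f (snapToG2 β f) ≤ β := by
  unfold snapToG2
  split_ifs with h
  · exact h.choose_spec.2
  · simpa [distB] using hβ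

lemma PreservesTransTriple.snapToG2 (hβ : β < 1 / 4) {f₁ f₂ f₃ g₁ g₂ g₃ : Cube n → Bool}
    (H : PreservesTransTriple g₁ g₂ g₃) (h₁ : distB n f₁ g₁ ≤ β) (h₂ : distB n f₂ g₂ ≤ β)
    (h₃ : distB n f₃ g₃ ≤ β) :
    PreservesTransTriple (snapToG2 β f₁) (snapToG2 β f₂) (snapToG2 β f₃) :=
  H.of_eq_of_isG2 (fun hg => snapToG2_eq hβ hg h₁) (fun hg => snapToG2_eq hβ hg h₂)
    (fun hg => snapToG2_eq hβ hg h₃)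

end Snap

section Transitivity

variable {k n : ℕ}

lemma transTriple_decide_lt {α : Type*} [LinearOrder α] (a b c : α) :
    TransTriple (decide (a < b)) (decide (a < c)) (decide (b < c)) := by
  simp only [TransTriple, decide_eq_decide]
  grind

lemma exists_perm_fin_three_of_transTriple :
    ∀ a b c : Bool, TransTriple a b c → ∃ τ : Equiv.Perm (Fin 3),
      decide (τ 0 < τ 1) = a ∧ decide (τ 0 < τ 2) = b ∧ decide (τ 1 < τ 2) = c := by
  decide

lemma preservesTransTriple_of_transOutcome {G : Fin 3 → Fin 3 → Cube n → Bool}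
    (hG : ∀ σ, TransOutcome 3 n G σ) : PreservesTransTriple (G 0 1) (G 0 2) (G 1 2) := by
  intro x y z hxyz
  choose σ hσ using fun v => exists_perm_fin_three_of_transTriple _ _ _ (hxyz v)
  obtain ⟨π, hπ⟩ := hG σ
  have hx : prefInput 3 n σ 0 1 = x := funext fun v => (hσ v).1
  have hy : prefInput 3 n σ 0 2 = y := funext fun v => (hσ v).2.1
  have hz : prefInput 3 n σ 1 2 = z := funext fun v => (hσ v).2.2
  rw [← hx, ← hy, ← hz, hπ 0 1 (by decide), hπ 0 2 (by decide), hπ 1 2 (by decide)]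
  exact transTriple_decide_lt _ _ _

theorem exists_equiv_fin_of_isStrictTotalOrder {α : Type*} [Fintype α] (r : α → α → Prop)
    [IsStrictTotalOrder α r] : ∃ π : α ≃ Fin (Fintype.card α), ∀ a b, r a b ↔ π a < π b := by
  classical
  let := linearOrderOfSTO r
  let e := (Fintype.orderIsoFinOfCardEq α rfl).symm
  exact ⟨e.toEquiv, fun a b => e.lt_iff_lt.symm⟩

/-- A tournament on `Fin k` without cyclic triangles is transitive. -/
theorem exists_perm_of_forall_transTriple (w : Fin k → Fin k → Bool)
    (hw : ∀ a b c, a < b → b < c → TransTriple (w a b) (w a c) (w b c)) :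
    ∃ π : Equiv.Perm (Fin k), ∀ i j, i < j → w i j = decide (π i < π j) := by
  let r : Fin k → Fin k → Prop := fun i j => (i < j ∧ w i j = true) ∨ (j < i ∧ w j i = false)
  have : IsStrictTotalOrder (Fin k) r :=
    { trichotomous := fun a b hab hba => by
        rcases lt_trichotomy a b with h | h | h <;> simp_all [r]
      irrefl := fun a => by simp [r]
      trans := fun a b c hab hbc => by
        simp only [r] at *
        rcases lt_trichotomy a c with hac | rfl | hca <;> grind }
  obtain ⟨π, hπ⟩ := exists_equiv_fin_of_isStrictTotalOrder r
  refine ⟨π.trans (finCongr (Fintype.card_fin k)), fun i j hij => ?_⟩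
  have := hπ i j
  simp only [r, hij, true_and, hij.not_gt, false_and, or_false] at this
  rw [Bool.eq_iff_iff, decide_eq_true_iff]
  exact this

lemma transOutcome_of_forall_preservesTransTriple {G : Fin k → Fin k → Cube n → Bool}
    (hG : ∀ a b c, a < b → b < c → PreservesTransTriple (G a b) (G a c) (G b c))
    (σ : Fin n → Equiv.Perm (Fin k)) : TransOutcome k n G σ :=
  exists_perm_of_forall_transTriple _ fun a b c hab hbc =>
    hG a b c hab hbc _ _ _ fun _ => transTriple_decide_lt _ _ _

end Transitivity

section Counting

lemma natCard_subtype_comp_eq_mul {S T : Type*} [Finite S] [Finite T] (Φ : S → T) {d : ℕ}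
    (hΦ : ∀ t, Nat.card {s // Φ s = t} = d) (Q : T → Prop) :
    Nat.card {s // Q (Φ s)} = Nat.card {t // Q t} * d := by
  classical
  have := Fintype.ofFinite {t // Q t}
  let e : (Σ t : {t // Q t}, {s // Φ s = t}) ≃ {s // Q (Φ s)} :=
    { toFun := fun p => ⟨p.2.1, (congrArg Q p.2.2).mpr p.1.2⟩
      invFun := fun s => ⟨⟨Φ s, s.2⟩, ⟨s, rfl⟩⟩
      left_inv := fun ⟨⟨t, ht⟩, ⟨s, hs⟩⟩ => by dsimp only at hs; subst hs; rfl
      right_inv := fun _ => rfl }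
  rw [← Nat.card_congr e, Nat.card_sigma, Finset.sum_congr rfl fun t _ => hΦ t.1, Finset.sum_const,
    Finset.card_univ, smul_eq_mul, Nat.card_eq_fintype_card]

lemma natCard_pi_fiber {ι A B : Type*} [Fintype ι] [Finite A] (φ : A → B)
    {d : ℕ} (hφ : ∀ b, Nat.card {a // φ a = b} = d) (x : ι → B) :
    Nat.card {σ : ι → A // (fun i => φ (σ i)) = x} = d ^ Fintype.card ι := by
  rw [Nat.card_congr ((Equiv.subtypeEquivRight fun σ => funext_iff).trans
    (Equiv.subtypePiEquivPi (p := fun i a => φ a = x i))), Nat.card_pi]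
  simp [hφ]

/-- If `φ` has fibres of equal size, the profile `i ↦ φ (σ i)` of a uniform profile `σ` is
uniform. -/
lemma natCard_comp_div_natCard {ι A B : Type*} [Finite ι] [Finite A] [Nonempty A]
    [Finite B] (φ : A → B) {d : ℕ}
    (hφ : ∀ b, Nat.card {a // φ a = b} = d) (Q : (ι → B) → Prop) :
    (Nat.card {σ : ι → A // Q fun i => φ (σ i)} : ℝ) / Nat.card (ι → A) =
      Nat.card {x // Q x} / Nat.card (ι → B) := by
  have := Fintype.ofFinite ι
  have hfib := natCard_pi_fiber (ι := ι) φ hφ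
  have hQ := natCard_subtype_comp_eq_mul (fun (σ : ι → A) i => φ (σ i)) hfib Q
  have hall := natCard_subtype_comp_eq_mul (fun (σ : ι → A) i => φ (σ i)) hfib fun _ => True
  simp only [Nat.card_congr (Equiv.subtypeUnivEquiv fun _ => trivial)] at hall
  have hd : d ≠ 0 := by
    obtain ⟨a⟩ := ‹Nonempty A›
    rw [← hφ (φ a)]
    have : Nonempty {a' // φ a' = φ a} := ⟨⟨a, rfl⟩⟩
    exact Nat.card_pos.ne'
  rw [hQ, hall, Nat.cast_mul, Nat.cast_mul, mul_div_mul_right _ _ (by positivity)]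

end Counting

section Profiles

variable {k n : ℕ}

lemma natCard_profile : Nat.card (Fin n → Equiv.Perm (Fin k)) = Nat.factorial k ^ n := by
  simp [Fintype.card_perm]

lemma natCard_prefInput_div {i j : Fin k} (hij : i ≠ j) (A : Cube n → Prop) :
    (Nat.card {σ : Fin n → Equiv.Perm (Fin k) // A (prefInput k n σ i j)} : ℝ)
      / (Nat.factorial k : ℝ) ^ n = Nat.card {x // A x} / 2 ^ n := by
  have hfib : ∀ b, Nat.card {τ : Equiv.Perm (Fin k) // decide (τ i < τ j) = b} =
      Nat.card {τ : Equiv.Perm (Fin k) // decide (τ i < τ j) = true} := by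
    rintro (_ | _)
    · refine Nat.card_congr ((Equiv.mulRight (Equiv.swap i j)).subtypeEquiv fun τ => ?_)
      simp only [Equiv.coe_mulRight, Equiv.Perm.mul_apply, Equiv.swap_apply_left,
        Equiv.swap_apply_right, decide_eq_false_iff_not, decide_eq_true_eq, not_lt]
      exact (τ.injective.ne hij).symm.le_iff_lt
    · rfl
  have := natCard_comp_div_natCard (ι := Fin n) (fun τ : Equiv.Perm (Fin k) => decide (τ i < τ j))
    hfib A
  rw [natCard_profile, natCard_cube] at this
  exact_mod_cast this

lemma distB_le_distk {i j : Fin k} (hij : i < j) (F G : Fin k → Fin k → Cube n → Bool) :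
    distB n (F i j) (G i j) ≤ distk k n F G := by
  rw [distB, ← natCard_prefInput_div hij.ne fun x => F i j x ≠ G i j x, distk]
  gcongr
  exact Nat.card_mono (Set.toFinite _) fun σ hσ => ⟨i, j, hij, hσ⟩

lemma distk_le_sum (F G : Fin k → Fin k → Cube n → Bool) :
    distk k n F G ≤
      ∑ p : {p : Fin k × Fin k // p.1 < p.2}, distB n (F p.1.1 p.1.2) (G p.1.1 p.1.2) := by
  let bad (p : Fin k × Fin k) (σ : Fin n → Equiv.Perm (Fin k)) : Prop :=
    F p.1 p.2 (prefInput k n σ p.1 p.2) ≠ G p.1 p.2 (prefInput k n σ p.1 p.2)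
  have hsurj : Function.Surjective
      fun q : (Σ p : {p : Fin k × Fin k // p.1 < p.2}, {σ // bad p σ}) =>
        (⟨q.2.1, q.1.1.1, q.1.1.2, q.1.2, q.2.2⟩ : {σ // ∃ i j : Fin k, i < j ∧
          F i j (prefInput k n σ i j) ≠ G i j (prefInput k n σ i j)}) := by
    rintro ⟨σ, i, j, hij, h⟩
    exact ⟨⟨⟨(i, j), hij⟩, σ, h⟩, rfl⟩
  calc distk k n F G ≤ (Nat.card (Σ p : {p : Fin k × Fin k // p.1 < p.2}, {σ // bad p σ}) : ℝ)
        / (Nat.factorial k : ℝ) ^ n := by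
        rw [distk]
        gcongr
        exact Nat.card_le_card_of_surjective _ hsurj
    _ = _ := by
        rw [Nat.card_sigma, Nat.cast_sum, Finset.sum_div]
        exact Finset.sum_congr rfl fun p _ =>
          natCard_prefInput_div p.2.ne fun x => F p.1.1 p.1.2 x ≠ G p.1.1 p.1.2 x

lemma distk_le_of_forall_distB_le {F G : Fin k → Fin k → Cube n → Bool} {β : ℝ} (hβ : 0 ≤ β)
    (h : ∀ i j, i < j → distB n (F i j) (G i j) ≤ β) : distk k n F G ≤ k ^ 2 * β :=
  calc distk k n F G ≤ ∑ _p : {p : Fin k × Fin k // p.1 < p.2}, β :=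
        (distk_le_sum F G).trans (Finset.sum_le_sum fun p _ => h _ _ p.2)
    _ ≤ k ^ 2 * β := by
        rw [Finset.sum_const, Finset.card_univ, nsmul_eq_mul]
        gcongr
        exact_mod_cast (Fintype.card_subtype_le _).trans (by simp [sq])

end Profiles

section Restriction

variable {k m n : ℕ}

lemma Equiv.Perm.eq_of_lt_iff_lt {π π' : Equiv.Perm (Fin m)}
    (h : ∀ a b, π a < π b ↔ π' a < π' b) : π = π' := by
  let e : Fin m ≃o Fin m :=
    { toEquiv := π.symm.trans π'
      map_rel_iff' := fun {a b} => by
        simp only [Equiv.trans_apply, ← not_lt, ← h, Equiv.apply_symm_apply] }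
  ext a
  simpa [e] using congrArg (fun f : Fin m ≃o Fin m => (f (π a) : ℕ)) (Subsingleton.elim (.refl _) e)

lemma exists_relOrder {e : Fin m → Fin k} (he : Function.Injective e) :
    ∃ ρ : Equiv.Perm (Fin k) → Equiv.Perm (Fin m),
      ∀ τ a b, τ (e a) < τ (e b) ↔ ρ τ a < ρ τ b := by
  choose π hπ using fun τ : Equiv.Perm (Fin k) =>
    @exists_equiv_fin_of_isStrictTotalOrder _ _ _
      (Function.Injective.isStrictTotalOrder_onFun (r := fun x y : Fin k => x < y)
        (τ.injective.comp he))
  exact ⟨fun τ => (π τ).trans (finCongr (Fintype.card_fin m)), hπ⟩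

lemma natCard_relOrder_fiber {e : Fin m → Fin k} (he : Function.Injective e)
    {ρ : Equiv.Perm (Fin k) → Equiv.Perm (Fin m)} (hρ : ∀ τ a b, τ (e a) < τ (e b) ↔ ρ τ a < ρ τ b)
    (π : Equiv.Perm (Fin m)) : Nat.card {τ // ρ τ = π} = Nat.card {τ // ρ τ = 1} := by
  let π' := π.viaFintypeEmbedding ⟨e, he⟩
  have himg : ∀ c, π' (e c) = e (π c) := Equiv.Perm.viaFintypeEmbedding_apply_image π ⟨e, he⟩
  have hmul : ∀ τ, ρ (τ * π') = ρ τ * π := fun τ => Equiv.Perm.eq_of_lt_iff_lt fun a b => by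
    rw [← hρ, Equiv.Perm.mul_apply, Equiv.Perm.mul_apply, Equiv.Perm.mul_apply,
      Equiv.Perm.mul_apply, ← hρ, himg, himg]
  exact (Nat.card_congr ((Equiv.mulRight π').subtypeEquiv fun τ => by
    simp [hmul])).symm

lemma transOutcome_comp {e : Fin m → Fin k} (he : StrictMono e)
    {ρ : Equiv.Perm (Fin k) → Equiv.Perm (Fin m)} (hρ : ∀ τ a b, τ (e a) < τ (e b) ↔ ρ τ a < ρ τ b)
    {F : Fin k → Fin k → Cube n → Bool} {σ : Fin n → Equiv.Perm (Fin k)}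
    (h : TransOutcome k n F σ) :
    TransOutcome m n (fun a b => F (e a) (e b)) fun v => ρ (σ v) := by
  obtain ⟨π, hπ⟩ := h
  refine ⟨ρ π, fun a b hab => ?_⟩
  have : prefInput m n (fun v => ρ (σ v)) a b = prefInput k n σ (e a) (e b) :=
    funext fun v => decide_eq_decide.2 (hρ _ a b).symm
  rw [this]
  exact (hπ _ _ (he hab)).trans (decide_eq_decide.2 (hρ π a b))

lemma PFk_comp_le {e : Fin m → Fin k} (he : StrictMono e) (F : Fin k → Fin k → Cube n → Bool) :
    PFk m n (fun a b => F (e a) (e b)) ≤ PFk k n F := by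
  obtain ⟨ρ, hρ⟩ := exists_relOrder he.injective
  have hpush := natCard_comp_div_natCard (ι := Fin n) ρ (natCard_relOrder_fiber he.injective hρ)
    fun σ => ¬TransOutcome m n (fun a b => F (e a) (e b)) σ
  rw [natCard_profile, natCard_profile] at hpush
  push_cast at hpush
  rw [PFk, PFk, ← hpush]
  gcongr
  exact Nat.card_mono (Set.toFinite _) fun σ hσ h => hσ (transOutcome_comp he hρ h)

end Restriction

section Reduction

variable {k n : ℕ}

lemma exists_transOutcome_distk_eq_D1k (F : Fin k → Fin k → Cube n → Bool) :
    ∃ G, (∀ σ, TransOutcome k n G σ) ∧ distk k n F G = D1k k n F := by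
  have hfin : {r : ℝ | ∃ G : Fin k → Fin k → Cube n → Bool,
      (∀ σ, TransOutcome k n G σ) ∧ r = distk k n F G}.Finite :=
    (Set.finite_range fun G => distk k n F G).subset fun r ⟨G, _, hr⟩ => ⟨G, hr.symm⟩
  have hne : {r : ℝ | ∃ G : Fin k → Fin k → Cube n → Bool,
      (∀ σ, TransOutcome k n G σ) ∧ r = distk k n F G}.Nonempty :=
    ⟨_, fun i j _ => decide (i < j), fun _ => ⟨1, fun _ _ _ => rfl⟩, rfl⟩
  obtain ⟨G, hG, hr⟩ := hne.csInf_mem hfin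
  exact ⟨G, hG, hr.symm⟩

lemma D1k_le_distk {F G : Fin k → Fin k → Cube n → Bool} (hG : ∀ σ, TransOutcome k n G σ) :
    D1k k n F ≤ distk k n F G :=
  csInf_le ⟨0, by rintro r ⟨G, _, rfl⟩; unfold distk; positivity⟩ ⟨G, hG, rfl⟩

lemma preservesTransTriple_snapToG2_of_D1k_le {F : Fin k → Fin k → Cube n → Bool} {β : ℝ}
    (hβ : β < 1 / 4) (i j l : Fin k)
    (hD : D1k 3 n (fun a b => F (![i, j, l] a) (![i, j, l] b)) ≤ β) :
    PreservesTransTriple (snapToG2 β (F i j)) (snapToG2 β (F i l)) (snapToG2 β (F j l)) := by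
  let F₃ : Fin 3 → Fin 3 → Cube n → Bool := fun a b => F (![i, j, l] a) (![i, j, l] b)
  obtain ⟨G, hG, hGF⟩ := exists_transOutcome_distk_eq_D1k F₃
  have hclose : ∀ a b : Fin 3, a < b → distB n (F₃ a b) (G a b) ≤ β :=
    fun a b hab => (distB_le_distk hab F₃ G).trans (hGF ▸ hD)
  exact (preservesTransTriple_of_transOutcome hG).snapToG2 hβ
    (hclose 0 1 (by decide)) (hclose 0 2 (by decide)) (hclose 1 2 (by decide))

end Reduction

theorem mossel_reduction_general (δ₀ : ℝ → ℝ)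
    (h3 : ∀ (n : ℕ), 1 ≤ n → ∀ F : Fin 3 → Fin 3 → Cube n → Bool, ∀ ε : ℝ,
      0 < ε → ε ≤ 1 → PFk 3 n F ≤ δ₀ ε → D1k 3 n F ≤ ε) :
    ∀ (k n : ℕ), 3 ≤ k → 1 ≤ n → ∀ F : Fin k → Fin k → Cube n → Bool, ∀ ε : ℝ,
      0 < ε → ε ≤ 1 → PFk k n F ≤ δ₀ (ε / (k : ℝ) ^ 2) → D1k k n F ≤ ε := by
  intro k n hk hn F ε hε0 hε1 hP
  set β := ε / (k : ℝ) ^ 2 with hβ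
  have hk2 : (9 : ℝ) ≤ (k : ℝ) ^ 2 := by
    have : (3 : ℝ) ≤ k := by exact_mod_cast hk
    nlinarith
  have hβ0 : 0 < β := by positivity
  have hβ9 : β ≤ 1 / 9 := by
    rw [hβ, div_le_div_iff₀ (by positivity) (by norm_num)]
    nlinarith
  have htriple : ∀ i j l : Fin k, i < j → j < l → PreservesTransTriple
      (snapToG2 β (F i j)) (snapToG2 β (F i l)) (snapToG2 β (F j l)) := fun i j l hij hjl =>
    have he : StrictMono ![i, j, l] := by simp [Fin.strictMono_iff_lt_succ, hij, hjl]
    preservesTransTriple_snapToG2_of_D1k_le (by linarith) i j l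
      (h3 n hn _ β hβ0 (by linarith) ((PFk_comp_le he F).trans hP))
  calc D1k k n F ≤ distk k n F fun i j => snapToG2 β (F i j) :=
        D1k_le_distk (transOutcome_of_forall_preservesTransTriple htriple)
    _ ≤ k ^ 2 * β := distk_le_of_forall_distB_le hβ0.le fun i j _ => distB_snapToG2_le hβ0.le _
    _ = ε := by rw [hβ]; field_simp

/-- **Mossel's reduction lemma** (leveraging 3 alternatives to `k` alternatives).
If `δ₀ : (0,1] → (0,1]` is such that every IIA GSWF on three alternatives with
`P(F) ≤ δ₀(ε)` satisfies `D₁(F) ≤ ε`, then every IIA GSWF on `k ≥ 3` alternatives with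
`P(F) ≤ δ₀(ε/k²)` satisfies `D₁(F) ≤ ε`. -/
theorem mossel_reduction (δ₀ : ℝ → ℝ)
    (hδ : ∀ ε : ℝ, 0 < ε → ε ≤ 1 → 0 < δ₀ ε ∧ δ₀ ε ≤ 1)
    (h3 : ∀ (n : ℕ), 1 ≤ n → ∀ F : Fin 3 → Fin 3 → Cube n → Bool, ∀ ε : ℝ,
      0 < ε → ε ≤ 1 → PFk 3 n F ≤ δ₀ ε → D1k 3 n F ≤ ε) :
    ∀ (k n : ℕ), 3 ≤ k → 1 ≤ n → ∀ F : Fin k → Fin k → Cube n → Bool, ∀ ε : ℝ,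
      0 < ε → ε ≤ 1 → PFk k n F ≤ δ₀ (ε / (k : ℝ) ^ 2) → D1k k n F ≤ ε :=
  mossel_reduction_general δ₀ h3

end
end
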